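/- Let ∇̄ be the bi-conformal connection, defined by Γ̄^a_{bc} = γ^a_{bc} + L^a_{bc} with L^a_{bc} = (1/2p)(E_bP^a_c + E_cP^a_b) + (1/(2(n−p)))(W_bΠ^a_c + W_cΠ^a_b) + (1/2)(P^a_p − Π^a_p)M^p_{bc}. Then ∇̄_aP^{ab} = ∇̄_aΠ^{ab} = ∇̄_aP^a_b = ∇̄_aΠ^a_b = 0. -/

import Mathlib

open scoped BigOperators

noncomputable section

/-- Points of the local chart, modelled as `ℝⁿ`. -/
abbrev Pt (n : ℕ) := Fin n → ℝ
/-- Scalar fields. -/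
abbrev Sc (n : ℕ) := Pt n → ℝ
/-- Fields with one index. -/
abbrev Ten1 (n : ℕ) := Pt n → Fin n → ℝ
/-- Fields with two indices. -/
abbrev Ten2 (n : ℕ) := Pt n → Fin n → Fin n → ℝ
/-- Fields with three indices. -/
abbrev Ten3 (n : ℕ) := Pt n → Fin n → Fin n → Fin n → ℝ
/-- Fields with four indices. -/
abbrev Ten4 (n : ℕ) := Pt n → Fin n → Fin n → Fin n → Fin n → ℝ

variable {n : ℕ}

/-- Partial derivative `∂ᵢ f (x)`. -/
def pd (i : Fin n) (f : Sc n) (x : Pt n) : ℝ :=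
  fderiv ℝ f x (Pi.single i 1)

/-- Christoffel symbols `Γ^a_{bc}` of a metric `g` with inverse metric `ginv`. -/
def christoffel (g ginv : Ten2 n) : Ten3 n := fun x a b c =>
  (1/2) * ∑ e, ginv x a e *
    (pd b (fun y => g y c e) x + pd c (fun y => g y b e) x - pd e (fun y => g y b c) x)

/-- Covariant derivative `∇_a T_{bc}` for a connection with coefficients `Γ^r_{ab}`. -/
def cov2 (Γ : Ten3 n) (T : Ten2 n) : Ten3 n := fun x a b c =>
  pd a (fun y => T y b c) x - (∑ r, Γ x r a b * T x r c) - ∑ r, Γ x r a c * T x b r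

/-- Covariant derivative `∇_e T^{ab}`. -/
def cov20 (Γ : Ten3 n) (T : Ten2 n) : Ten3 n := fun x e a b =>
  pd e (fun y => T y a b) x + (∑ r, Γ x a e r * T x r b) + ∑ r, Γ x b e r * T x a r

/-- Covariant derivative `∇_e T^a_b` (first index of `T` contravariant). -/
def cov11 (Γ : Ten3 n) (T : Ten2 n) : Ten3 n := fun x e a b =>
  pd e (fun y => T y a b) x + (∑ r, Γ x a e r * T x r b) - ∑ r, Γ x r e b * T x a r

/-- Covariant derivative `∇_a ω_b` of a 1-form. -/
def cov1 (Γ : Ten3 n) (ω : Ten1 n) : Ten2 n := fun x a b =>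
  pd a (fun y => ω y b) x - ∑ r, Γ x r a b * ω x r

/-- Covariant derivative `∇_b ξ^a` of a vector field; result indexed as `x a b` = `∇_b ξ^a`. -/
def covVec (Γ : Ten3 n) (ξ : Ten1 n) : Ten2 n := fun x a b =>
  pd b (fun y => ξ y a) x + ∑ r, Γ x a b r * ξ x r

/-- Covariant derivative `∇_e L^a_{bc}` of a (1,2) tensor; result indexed `x e a b c`. -/
def cov12 (Γ : Ten3 n) (L : Ten3 n) : Ten4 n := fun x e a b c =>
  pd e (fun y => L y a b c) x + (∑ r, Γ x a e r * L x r b c)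
    - (∑ r, Γ x r e b * L x a r c) - ∑ r, Γ x r e c * L x a b r

/-- Curvature tensor `R^a_{bcd} = ∂_c Γ^a_{db} - ∂_d Γ^a_{cb} + Γ^a_{rc}Γ^r_{db} - Γ^a_{rd}Γ^r_{cb}`. -/
def riem (Γ : Ten3 n) : Ten4 n := fun x a b c d =>
  pd c (fun y => Γ y a d b) x - pd d (fun y => Γ y a c b) x
    + (∑ r, Γ x a r c * Γ x r d b) - ∑ r, Γ x a r d * Γ x r c b

/-- Action of a vector field on a scalar, `ξ(f)`. -/
def lieSc (ξ : Ten1 n) (f : Sc n) : Sc n := fun x => ∑ c, ξ x c * pd c f x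

/-- Lie derivative of a 1-form. -/
def lie1 (ξ : Ten1 n) (ω : Ten1 n) : Ten1 n := fun x a =>
  (∑ c, ξ x c * pd c (fun y => ω y a) x) + ∑ c, pd a (fun y => ξ y c) x * ω x c

/-- Lie derivative of a covariant 2-tensor `T_{ab}`. -/
def lie2 (ξ : Ten1 n) (T : Ten2 n) : Ten2 n := fun x a b =>
  (∑ c, ξ x c * pd c (fun y => T y a b) x)
    + (∑ c, pd a (fun y => ξ y c) x * T x c b)
    + ∑ c, pd b (fun y => ξ y c) x * T x a c

/-- Lie derivative of a contravariant 2-tensor `T^{ab}`. -/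
def lie20 (ξ : Ten1 n) (T : Ten2 n) : Ten2 n := fun x a b =>
  (∑ c, ξ x c * pd c (fun y => T y a b) x)
    - (∑ c, pd c (fun y => ξ y a) x * T x c b)
    - ∑ c, pd c (fun y => ξ y b) x * T x a c

/-- Lie derivative of a mixed tensor `T^a_b`. -/
def lie11 (ξ : Ten1 n) (T : Ten2 n) : Ten2 n := fun x a b =>
  (∑ c, ξ x c * pd c (fun y => T y a b) x)
    - (∑ c, pd c (fun y => ξ y a) x * T x c b)
    + ∑ c, pd b (fun y => ξ y c) x * T x a c

/-- Lie derivative of a covariant 3-tensor `T_{abc}`. -/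
def lie3 (ξ : Ten1 n) (T : Ten3 n) : Ten3 n := fun x a b c =>
  (∑ d, ξ x d * pd d (fun y => T y a b c) x)
    + (∑ d, pd a (fun y => ξ y d) x * T x d b c)
    + (∑ d, pd b (fun y => ξ y d) x * T x a d c)
    + ∑ d, pd c (fun y => ξ y d) x * T x a b d

/-- Lie derivative of a (1,2) tensor `T^a_{bc}`. -/
def lie12 (ξ : Ten1 n) (T : Ten3 n) : Ten3 n := fun x a b c =>
  (∑ d, ξ x d * pd d (fun y => T y a b c) x)
    - (∑ d, pd d (fun y => ξ y a) x * T x d b c)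
    + (∑ d, pd b (fun y => ξ y d) x * T x a d c)
    + ∑ d, pd c (fun y => ξ y d) x * T x a b d

/-- Lie derivative of connection coefficients `£_ξ Γ^a_{bc}` (standard coordinate formula,
equivalent to the derivative of the pullback of the connection by the flow of `ξ`). -/
def lieConn (ξ : Ten1 n) (Γ : Ten3 n) : Ten3 n := fun x a b c =>
  (∑ d, ξ x d * pd d (fun y => Γ y a b c) x)
    - (∑ d, pd d (fun y => ξ y a) x * Γ x d b c)
    + (∑ d, pd b (fun y => ξ y d) x * Γ x a d c)
    + (∑ d, pd c (fun y => ξ y d) x * Γ x a b d)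
    + pd b (fun y => pd c (fun z => ξ z a) y) x

/-- Lie bracket of vector fields. -/
def bracket (ξ η : Ten1 n) : Ten1 n := fun x a =>
  (∑ c, ξ x c * pd c (fun y => η y a) x) - ∑ c, η x c * pd c (fun y => ξ y a) x

/-- Index raising of the first index: `T^a_b = g^{ac} T_{cb}`. -/
def mixUp (ginv T : Ten2 n) : Ten2 n := fun x a b => ∑ c, ginv x a c * T x c b

/-- Raising both indices: `T^{ab} = g^{ac} g^{bd} T_{cd}`. -/
def up2 (ginv T : Ten2 n) : Ten2 n := fun x a b => ∑ c, ∑ d, ginv x a c * ginv x b d * T x c d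

/-- The tensor `M_{abc} = ∇_b P_{ac} + ∇_c P_{ab} - ∇_a P_{bc}` (Levi-Civita connection of `g`). -/
def Mtens (g ginv P : Ten2 n) : Ten3 n := fun x a b c =>
  cov2 (christoffel g ginv) P x b a c + cov2 (christoffel g ginv) P x c a b
    - cov2 (christoffel g ginv) P x a b c

/-- The 1-form `E_a = M_{acb} P^{cb}`. -/
def Eform (g ginv P : Ten2 n) : Ten1 n := fun x a =>
  ∑ c, ∑ b, Mtens g ginv P x a c b * up2 ginv P x c b

/-- The 1-form `W_a = -M_{acb} Π^{cb}`. -/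
def Wform (g ginv P Q : Ten2 n) : Ten1 n := fun x a =>
  - ∑ c, ∑ b, Mtens g ginv P x a c b * up2 ginv Q x c b

/-- The tensor `T_{abc} = M_{abc} + W_a Π_{bc}/(n-p) - E_a P_{bc}/p`. -/
def Ttens (p : ℝ) (g ginv P Q : Ten2 n) : Ten3 n := fun x a b c =>
  Mtens g ginv P x a b c + (1/((n : ℝ) - p)) * Wform g ginv P Q x a * Q x b c
    - (1/p) * Eform g ginv P x a * P x b c

/-- The difference tensor `L^a_{bc}` of the bi-conformal connection. -/
def Ltens (p : ℝ) (g ginv P Q : Ten2 n) : Ten3 n := fun x a b c =>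
  (1/(2*p)) * (Eform g ginv P x b * mixUp ginv P x a c
      + Eform g ginv P x c * mixUp ginv P x a b)
  + (1/(2*((n : ℝ) - p))) * (Wform g ginv P Q x b * mixUp ginv Q x a c
      + Wform g ginv P Q x c * mixUp ginv Q x a b)
  + (1/2) * ∑ r, (mixUp ginv P x a r - mixUp ginv Q x a r)
      * (∑ s, ginv x r s * Mtens g ginv P x s b c)

/-- The bi-conformal connection `Γ̄^a_{bc} = γ^a_{bc} + L^a_{bc}`. -/
def biconn (p : ℝ) (g ginv P Q : Ten2 n) : Ten3 n := fun x a b c =>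
  christoffel g ginv x a b c + Ltens p g ginv P Q x a b c

/-- The standing hypotheses: `g` a smooth pseudo-Riemannian metric with inverse `ginv`, and
`P`, `Q` smooth symmetric orthogonal complementary projectors with respect to `g`. -/
def ProjectorSetup (g ginv P Q : Ten2 n) : Prop :=
  (∀ a b, ContDiff ℝ (⊤ : ℕ∞) (fun x => g x a b)) ∧
  (∀ a b, ContDiff ℝ (⊤ : ℕ∞) (fun x => ginv x a b)) ∧
  (∀ a b, ContDiff ℝ (⊤ : ℕ∞) (fun x => P x a b)) ∧
  (∀ x a b, g x a b = g x b a) ∧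
  (∀ x a b, ginv x a b = ginv x b a) ∧
  (∀ x a b, P x a b = P x b a) ∧
  (∀ x a b, Q x a b = Q x b a) ∧
  (∀ x a b, (∑ c, g x a c * ginv x c b) = if a = b then (1:ℝ) else 0) ∧
  (∀ x a b, P x a b + Q x a b = g x a b) ∧
  (∀ x a b, (∑ c, P x a c * mixUp ginv P x c b) = P x a b) ∧
  (∀ x a b, (∑ c, Q x a c * mixUp ginv Q x c b) = Q x a b) ∧
  (∀ x a b, (∑ c, P x a c * mixUp ginv Q x c b) = 0)


/-! ### Partial derivative toolkit -/

variable {n : ℕ}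

theorem pd_congr {f g : Sc n} (h : f = g) (i : Fin n) (x : Pt n) : pd i f x = pd i g x := by rw [h]

theorem pd_const (i : Fin n) (x : Pt n) (c : ℝ) : pd i (fun _ => c) x = 0 := by simp [pd]

theorem pd_add {f g : Sc n} {x : Pt n} (i : Fin n) (hf : DifferentiableAt ℝ f x)
    (hg : DifferentiableAt ℝ g x) :
    pd i (fun y => f y + g y) x = pd i f x + pd i g x := by
  simp [pd, fderiv_fun_add hf hg]

theorem pd_sub {f g : Sc n} {x : Pt n} (i : Fin n) (hf : DifferentiableAt ℝ f x)
    (hg : DifferentiableAt ℝ g x) :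
    pd i (fun y => f y - g y) x = pd i f x - pd i g x := by
  simp [pd, fderiv_fun_sub hf hg]

theorem pd_mul {f g : Sc n} {x : Pt n} (i : Fin n) (hf : DifferentiableAt ℝ f x)
    (hg : DifferentiableAt ℝ g x) :
    pd i (fun y => f y * g y) x = pd i f x * g x + f x * pd i g x := by
  simp [pd, fderiv_fun_mul hf hg]; ring

theorem pd_sum {ι : Type*} {x : Pt n} (i : Fin n) (s : Finset ι) (f : ι → Sc n)
    (hf : ∀ j ∈ s, DifferentiableAt ℝ (f j) x) :
    pd i (fun y => ∑ j ∈ s, f j y) x = ∑ j ∈ s, pd i (f j) x := by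
  simp [pd, fderiv_fun_sum hf]

/-! ### Setup record and basic algebra -/

/-- All the pointwise hypotheses unpacked. -/
structure Setup (g ginv P Q : Ten2 n) : Prop where
  hgc : ∀ a b, ContDiff ℝ (⊤ : ℕ∞) (fun x => g x a b)
  hgic : ∀ a b, ContDiff ℝ (⊤ : ℕ∞) (fun x => ginv x a b)
  hPc : ∀ a b, ContDiff ℝ (⊤ : ℕ∞) (fun x => P x a b)
  hgs : ∀ x a b, g x a b = g x b a
  hgis : ∀ x a b, ginv x a b = ginv x b a
  hPs : ∀ x a b, P x a b = P x b a
  hQs : ∀ x a b, Q x a b = Q x b a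
  hdel : ∀ x a b, (∑ c, g x a c * ginv x c b) = if a = b then (1:ℝ) else 0
  hPQ : ∀ x a b, P x a b + Q x a b = g x a b
  hPP : ∀ x a b, (∑ c, P x a c * mixUp ginv P x c b) = P x a b
  hQQ : ∀ x a b, (∑ c, Q x a c * mixUp ginv Q x c b) = Q x a b
  hPQ0 : ∀ x a b, (∑ c, P x a c * mixUp ginv Q x c b) = 0

namespace Setup

variable {g ginv P Q : Ten2 n}

theorem hdel' (S : Setup g ginv P Q) (x : Pt n) (a b : Fin n) :
    (∑ c, ginv x a c * g x c b) = if a = b then (1:ℝ) else 0 := by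
  have h := S.hdel x b a
  calc (∑ c, ginv x a c * g x c b) = ∑ c, g x b c * ginv x c a := by
        refine Finset.sum_congr rfl fun c _ => ?_
        rw [S.hgs x b c, S.hgis x a c]; ring
    _ = _ := by rw [h]; simp [eq_comm]

theorem hQc (S : Setup g ginv P Q) : ∀ a b, ContDiff ℝ (⊤ : ℕ∞) (fun x => Q x a b) := by
  intro a b
  have e : (fun x => Q x a b) = fun x => g x a b - P x a b := by
    funext x; have := S.hPQ x a b; linarith
  rw [e]; exact (S.hgc a b).sub (S.hPc a b)

theorem hgd (S : Setup g ginv P Q) (x : Pt n) (a b : Fin n) :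
    DifferentiableAt ℝ (fun y => g y a b) x :=
  ((S.hgc a b).differentiable (by simp)).differentiableAt
theorem hgid (S : Setup g ginv P Q) (x : Pt n) (a b : Fin n) :
    DifferentiableAt ℝ (fun y => ginv y a b) x :=
  ((S.hgic a b).differentiable (by simp)).differentiableAt
theorem hPd (S : Setup g ginv P Q) (x : Pt n) (a b : Fin n) :
    DifferentiableAt ℝ (fun y => P y a b) x :=
  ((S.hPc a b).differentiable (by simp)).differentiableAt
theorem hQd (S : Setup g ginv P Q) (x : Pt n) (a b : Fin n) :
    DifferentiableAt ℝ (fun y => Q y a b) x :=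
  ((S.hQc a b).differentiable (by simp)).differentiableAt

/-- `∑_r g_{dr} Γ^r_{bc} = (1/2)(∂_b g_{cd} + ∂_c g_{bd} - ∂_d g_{bc})`. -/
theorem lowGam (S : Setup g ginv P Q) (x : Pt n) (d b c : Fin n) :
    (∑ r, g x d r * christoffel g ginv x r b c)
      = (1/2) * (pd b (fun y => g y c d) x + pd c (fun y => g y b d) x
          - pd d (fun y => g y b c) x) := by
  simp only [christoffel]
  calc (∑ r, g x d r * ((1/2) * ∑ e, ginv x r e *
          (pd b (fun y => g y c e) x + pd c (fun y => g y b e) x - pd e (fun y => g y b c) x)))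
      = ∑ r, ∑ e, (g x d r * ginv x r e) * ((1/2) *
          (pd b (fun y => g y c e) x + pd c (fun y => g y b e) x - pd e (fun y => g y b c) x)) := by
        refine Finset.sum_congr rfl fun r _ => ?_
        rw [Finset.mul_sum, Finset.mul_sum]
        exact Finset.sum_congr rfl fun e _ => by ring
    _ = ∑ e, (∑ r, g x d r * ginv x r e) * ((1/2) *
          (pd b (fun y => g y c e) x + pd c (fun y => g y b e) x - pd e (fun y => g y b c) x)) := by
        rw [Finset.sum_comm]
        exact Finset.sum_congr rfl fun e _ => (Finset.sum_mul _ _ _).symm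
    _ = _ := by
        simp only [S.hdel x d, ite_mul, one_mul, zero_mul]
        rw [Finset.sum_ite_eq]
        simp

end Setup
namespace Setup
variable {n : ℕ} {g ginv P Q : Ten2 n}

theorem sum_delta (f : Fin n → ℝ) (d : Fin n) :
    (∑ e, (if d = e then (1:ℝ) else 0) * f e) = f d := by
  simp [ite_mul]

theorem sum_delta' (f : Fin n → ℝ) (d : Fin n) :
    (∑ e, (if e = d then (1:ℝ) else 0) * f e) = f d := by
  simp [ite_mul]

theorem sum_delta_r (f : Fin n → ℝ) (d : Fin n) :
    (∑ e, f e * (if d = e then (1:ℝ) else 0)) = f d := by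
  simp [mul_ite]

theorem sum_delta_r' (f : Fin n → ℝ) (d : Fin n) :
    (∑ e, f e * (if e = d then (1:ℝ) else 0)) = f d := by
  simp [mul_ite]

/-- Metricity: `∇_e g_{bc} = 0`. -/
theorem covg (S : Setup g ginv P Q) (x : Pt n) (e b c : Fin n) :
    cov2 (christoffel g ginv) g x e b c = 0 := by
  have h1 : (∑ r, christoffel g ginv x r e b * g x r c)
      = (1/2) * (pd e (fun y => g y b c) x + pd b (fun y => g y e c) x
          - pd c (fun y => g y e b) x) := by
    rw [show (∑ r, christoffel g ginv x r e b * g x r c)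
        = ∑ r, g x c r * christoffel g ginv x r e b from
      Finset.sum_congr rfl fun r _ => by rw [S.hgs x r c]; ring]
    rw [S.lowGam x c e b]
  have h2 : (∑ r, christoffel g ginv x r e c * g x b r)
      = (1/2) * (pd e (fun y => g y b c) x + pd c (fun y => g y e b) x
          - pd b (fun y => g y e c) x) := by
    rw [show (∑ r, christoffel g ginv x r e c * g x b r)
        = ∑ r, g x b r * christoffel g ginv x r e c from
      Finset.sum_congr rfl fun r _ => by ring]
    rw [S.lowGam x b e c]
    rw [pd_congr (funext fun y => S.hgs y c b) e x, pd_congr (funext fun y => S.hgs y e b) c x]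
  simp only [cov2, h1, h2]; ring

/-- Derivative of the inverse metric. -/
theorem pdginv (S : Setup g ginv P Q) (x : Pt n) (e a b : Fin n) :
    pd e (fun y => ginv y a b) x
      = -∑ r, ∑ s, ginv x a r * ginv x s b * pd e (fun y => g y r s) x := by
  have key : ∀ r : Fin n, (∑ c, (pd e (fun y => g y r c) x * ginv x c b
      + g x r c * pd e (fun y => ginv y c b) x)) = 0 := by
    intro r
    have hconst : pd e (fun y => ∑ c, g y r c * ginv y c b) x = 0 := by
      rw [pd_congr (funext fun y => S.hdel y r b) e x, pd_const]
    rw [← hconst, pd_sum e Finset.univ (fun c y => g y r c * ginv y c b)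
      (fun c _ => ((S.hgd x r c).mul (S.hgid x c b)))]
    exact Finset.sum_congr rfl fun c _ =>
      (pd_mul e (S.hgd x r c) (S.hgid x c b)).symm
  have expand : (∑ r, ginv x a r * (∑ c, (pd e (fun y => g y r c) x * ginv x c b
      + g x r c * pd e (fun y => ginv y c b) x))) = 0 := by
    simp only [key, mul_zero, Finset.sum_const_zero]
  have split : (∑ r, ∑ c, ginv x a r * pd e (fun y => g y r c) x * ginv x c b)
      + (∑ c, (∑ r, ginv x a r * g x r c) * pd e (fun y => ginv y c b) x) = 0 := by
    rw [← expand]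
    rw [show (∑ c, (∑ r, ginv x a r * g x r c) * pd e (fun y => ginv y c b) x)
        = ∑ r, ∑ c, ginv x a r * g x r c * pd e (fun y => ginv y c b) x by
      rw [Finset.sum_comm]
      exact Finset.sum_congr rfl fun c _ => Finset.sum_mul _ _ _]
    rw [← Finset.sum_add_distrib]
    refine Finset.sum_congr rfl fun r _ => ?_
    rw [Finset.mul_sum, ← Finset.sum_add_distrib]
    exact Finset.sum_congr rfl fun c _ => by ring
  have hd : (∑ c, (∑ r, ginv x a r * g x r c) * pd e (fun y => ginv y c b) x)
      = pd e (fun y => ginv y a b) x := by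
    simp only [S.hdel' x a]
    exact sum_delta _ a
  rw [hd] at split
  have : pd e (fun y => ginv y a b) x
      = -∑ r, ∑ c, ginv x a r * pd e (fun y => g y r c) x * ginv x c b := by linarith
  rw [this, neg_inj]
  exact Finset.sum_congr rfl fun r _ => Finset.sum_congr rfl fun s _ => by
    rw [S.hgis x s b]; ring

/-- Metricity for the inverse metric: `∇_e g^{ab} = 0`. -/
theorem covginv (S : Setup g ginv P Q) (x : Pt n) (e a b : Fin n) :
    cov20 (christoffel g ginv) ginv x e a b = 0 := by
  have t2 : (∑ r, christoffel g ginv x a e r * ginv x r b)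
      = ∑ r, ∑ s, (1/2) * (ginv x a s * ginv x r b *
          (pd e (fun y => g y r s) x + pd r (fun y => g y e s) x - pd s (fun y => g y e r) x)) := by
    simp only [christoffel, Finset.mul_sum]
    refine Finset.sum_congr rfl fun r _ => ?_
    rw [Finset.sum_mul]
    exact Finset.sum_congr rfl fun s _ => by ring
  have t3 : (∑ r, christoffel g ginv x b e r * ginv x a r)
      = ∑ r, ∑ s, (1/2) * (ginv x a s * ginv x r b *
          (pd e (fun y => g y s r) x + pd s (fun y => g y e r) x - pd r (fun y => g y e s) x)) := by
    simp only [christoffel, Finset.mul_sum]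
    rw [show (∑ r, (∑ s, (1/2) * (ginv x b s * (pd e (fun y => g y r s) x
        + pd r (fun y => g y e s) x - pd s (fun y => g y e r) x))) * ginv x a r)
        = ∑ r, ∑ s, ((1/2) * (ginv x b s * (pd e (fun y => g y r s) x
        + pd r (fun y => g y e s) x - pd s (fun y => g y e r) x))) * ginv x a r from
      Finset.sum_congr rfl fun r _ => Finset.sum_mul _ _ _]
    rw [Finset.sum_comm]
    refine Finset.sum_congr rfl fun r _ => Finset.sum_congr rfl fun s _ => ?_
    rw [S.hgis x b r]
    ring
  have hsum : (∑ r, ∑ s, (1/2) * (ginv x a s * ginv x r b *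
          (pd e (fun y => g y r s) x + pd r (fun y => g y e s) x - pd s (fun y => g y e r) x)))
      + (∑ r, ∑ s, (1/2) * (ginv x a s * ginv x r b *
          (pd e (fun y => g y s r) x + pd s (fun y => g y e r) x - pd r (fun y => g y e s) x)))
      = ∑ r, ∑ s, ginv x a s * ginv x r b * pd e (fun y => g y r s) x := by
    rw [← Finset.sum_add_distrib]
    refine Finset.sum_congr rfl fun r _ => ?_
    rw [← Finset.sum_add_distrib]
    refine Finset.sum_congr rfl fun s _ => ?_
    rw [pd_congr (funext fun y => S.hgs y s r) e x]
    ring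
  have hsym : (∑ r, ∑ s, ginv x a r * ginv x s b * pd e (fun y => g y r s) x)
      = ∑ r, ∑ s, ginv x a s * ginv x r b * pd e (fun y => g y r s) x := by
    rw [Finset.sum_comm]
    refine Finset.sum_congr rfl fun r _ => Finset.sum_congr rfl fun s _ => ?_
    rw [pd_congr (funext fun y => S.hgs y s r) e x]
  simp only [cov20, t2, t3, S.pdginv x e a b]
  rw [hsym]
  linarith [hsum]

end Setup
namespace Setup
variable {n : ℕ}

theorem sum2_swap (f g : Fin n → Fin n → ℝ) (h : ∀ r u, f r u = g u r) :
    (∑ r, ∑ u, f r u) = ∑ r, ∑ u, g r u := by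
  rw [Finset.sum_comm]
  exact Finset.sum_congr rfl fun r _ => Finset.sum_congr rfl fun u _ => h u r

/-- Leibniz rule: `∇_e (T_{br} S^r_c) = (∇T) S + T (∇S)` for the contraction of a
covariant 2-tensor with a mixed tensor. -/
theorem cov2_contract (Γ : Ten3 n) (T S : Ten2 n) (x : Pt n) (e b c : Fin n)
    (hT : ∀ a b, DifferentiableAt ℝ (fun y => T y a b) x)
    (hS : ∀ a b, DifferentiableAt ℝ (fun y => S y a b) x) :
    cov2 Γ (fun y b c => ∑ r, T y b r * S y r c) x e b c
      = ∑ r, (cov2 Γ T x e b r * S x r c + T x b r * cov11 Γ S x e r c) := by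
  simp only [cov2, cov11]
  rw [pd_sum e Finset.univ (fun r y => T y b r * S y r c) (fun r _ => (hT b r).mul (hS r c))]
  have hpd : ∀ r : Fin n, pd e (fun y => T y b r * S y r c) x
      = pd e (fun y => T y b r) x * S x r c + T x b r * pd e (fun y => S y r c) x :=
    fun r => pd_mul e (hT b r) (hS r c)
  simp only [hpd, Finset.mul_sum, Finset.sum_mul, mul_add, add_mul, sub_mul, mul_sub,
    Finset.sum_add_distrib, Finset.sum_sub_distrib]
  rw [sum2_swap (fun r u => Γ x r e b * (T x r u * S x u c))
      (fun r u => Γ x u e b * T x u r * S x r c) (fun r u => by ring)]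
  rw [sum2_swap (fun r u => Γ x r e c * (T x b u * S x u r))
      (fun r u => T x b r * (Γ x u e c * S x r u)) (fun r u => by ring)]
  rw [sum2_swap (fun r u => Γ x u e r * T x b u * S x r c)
      (fun r u => T x b r * Γ x r e u * S x u c) (fun r u => by ring)]
  ring

/-- Leibniz rule: `∇_e (U^{ac} T_{cb}) = (∇U) T + U (∇T)`. -/
theorem cov11_contract (Γ : Ten3 n) (U T : Ten2 n) (x : Pt n) (e a b : Fin n)
    (hU : ∀ a b, DifferentiableAt ℝ (fun y => U y a b) x)
    (hT : ∀ a b, DifferentiableAt ℝ (fun y => T y a b) x) :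
    cov11 Γ (fun y a b => ∑ c, U y a c * T y c b) x e a b
      = ∑ c, (cov20 Γ U x e a c * T x c b + U x a c * cov2 Γ T x e c b) := by
  simp only [cov11, cov20, cov2]
  rw [pd_sum e Finset.univ (fun c y => U y a c * T y c b) (fun c _ => (hU a c).mul (hT c b))]
  have hpd : ∀ c : Fin n, pd e (fun y => U y a c * T y c b) x
      = pd e (fun y => U y a c) x * T x c b + U x a c * pd e (fun y => T y c b) x :=
    fun c => pd_mul e (hU a c) (hT c b)
  simp only [hpd, Finset.mul_sum, Finset.sum_mul, mul_add, add_mul, sub_mul, mul_sub,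
    Finset.sum_add_distrib, Finset.sum_sub_distrib]
  rw [sum2_swap (fun r u => Γ x r e u * U x a u * T x r b)
      (fun r u => U x a r * (Γ x u e r * T x u b)) (fun r u => by ring)]
  rw [sum2_swap (fun r u => Γ x a e r * (U x r u * T x u b))
      (fun r u => Γ x a e u * U x u r * T x r b) (fun r u => by ring)]
  rw [sum2_swap (fun r u => Γ x r e b * (U x a u * T x u r))
      (fun r u => U x a r * (Γ x u e b * T x r u)) (fun r u => by ring)]
  ring

/-- Leibniz rule: `∇_e (S^a_d U^{db}) = (∇S) U + S (∇U)`. -/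
theorem cov20_contract (Γ : Ten3 n) (S U : Ten2 n) (x : Pt n) (e a b : Fin n)
    (hS : ∀ a b, DifferentiableAt ℝ (fun y => S y a b) x)
    (hU : ∀ a b, DifferentiableAt ℝ (fun y => U y a b) x) :
    cov20 Γ (fun y a b => ∑ d, S y a d * U y d b) x e a b
      = ∑ d, (cov11 Γ S x e a d * U x d b + S x a d * cov20 Γ U x e d b) := by
  simp only [cov11, cov20]
  rw [pd_sum e Finset.univ (fun d y => S y a d * U y d b) (fun d _ => (hS a d).mul (hU d b))]
  have hpd : ∀ d : Fin n, pd e (fun y => S y a d * U y d b) x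
      = pd e (fun y => S y a d) x * U x d b + S x a d * pd e (fun y => U y d b) x :=
    fun d => pd_mul e (hS a d) (hU d b)
  simp only [hpd, Finset.mul_sum, Finset.sum_mul, mul_add, add_mul, sub_mul, mul_sub,
    Finset.sum_add_distrib, Finset.sum_sub_distrib]
  rw [sum2_swap (fun r u => Γ x u e r * S x a u * U x r b)
      (fun r u => S x a r * (Γ x r e u * U x u b)) (fun r u => by ring)]
  rw [sum2_swap (fun r u => Γ x a e r * (S x r u * U x u b))
      (fun r u => Γ x a e u * S x u r * U x r b) (fun r u => by ring)]
  rw [sum2_swap (fun r u => Γ x b e r * (S x a u * U x u r))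
      (fun r u => S x a r * (Γ x b e u * U x r u)) (fun r u => by ring)]
  ring

end Setup
namespace Setup
variable {n : ℕ} {g ginv P Q : Ten2 n}

/-- `N_{e a b} = ∇_e P_{ab}` for the Levi-Civita connection. -/
def Nt (g ginv P : Ten2 n) : Ten3 n := cov2 (christoffel g ginv) P

/-- `∇_e P^a_b` (first index raised). -/
def NM (g ginv P : Ten2 n) : Ten3 n := fun x e a b => ∑ r, ginv x a r * Nt g ginv P x e r b

theorem Mtens_eq (x : Pt n) (a b c : Fin n) :
    Mtens g ginv P x a b c = Nt g ginv P x b a c + Nt g ginv P x c a b - Nt g ginv P x a b c :=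
  rfl

theorem Nsym (S : Setup g ginv P Q) (x : Pt n) (e a b : Fin n) :
    Nt g ginv P x e a b = Nt g ginv P x e b a := by
  simp only [Nt, cov2]
  rw [pd_congr (funext fun y => S.hPs y a b) e x]
  rw [show (∑ r, christoffel g ginv x r e b * P x a r)
      = ∑ r, christoffel g ginv x r e b * P x r a from
    Finset.sum_congr rfl fun r _ => by rw [S.hPs x a r]]
  rw [show (∑ r, christoffel g ginv x r e a * P x r b)
      = ∑ r, christoffel g ginv x r e a * P x b r from
    Finset.sum_congr rfl fun r _ => by rw [S.hPs x r b]]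
  ring

theorem hPmd (S : Setup g ginv P Q) (x : Pt n) (a b : Fin n) :
    DifferentiableAt ℝ (fun y => mixUp ginv P y a b) x := by
  simp only [mixUp]
  exact DifferentiableAt.fun_sum fun c _ => (S.hgid x a c).mul (S.hPd x c b)

theorem hQmd (S : Setup g ginv P Q) (x : Pt n) (a b : Fin n) :
    DifferentiableAt ℝ (fun y => mixUp ginv Q y a b) x := by
  simp only [mixUp]
  exact DifferentiableAt.fun_sum fun c _ => (S.hgid x a c).mul (S.hQd x c b)

/-- `∇Q = -∇P`. -/
theorem covQ (S : Setup g ginv P Q) (x : Pt n) (e a b : Fin n) :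
    cov2 (christoffel g ginv) Q x e a b = - Nt g ginv P x e a b := by
  have hQfun : Q = fun y a b => g y a b - P y a b := by
    funext y a b; have := S.hPQ y a b; linarith
  have hsub : cov2 (christoffel g ginv) (fun y a b => g y a b - P y a b) x e a b
      = cov2 (christoffel g ginv) g x e a b - cov2 (christoffel g ginv) P x e a b := by
    simp only [cov2]
    rw [show pd e (fun y => g y a b - P y a b) x
        = pd e (fun y => g y a b) x - pd e (fun y => P y a b) x from by
      have := pd_sub (f := fun y => g y a b) (g := fun y => P y a b) (x := x) e
        (S.hgd x a b) (S.hPd x a b)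
      exact this]
    simp only [mul_sub, Finset.sum_sub_distrib]
    ring
  rw [hQfun, hsub, S.covg x e a b, Nt]
  ring

/-- `∇_e P^a_b` computes `cov11` of the mixed projector. -/
theorem cov11_Pm (S : Setup g ginv P Q) (x : Pt n) (e a b : Fin n) :
    cov11 (christoffel g ginv) (mixUp ginv P) x e a b = NM g ginv P x e a b := by
  have h := cov11_contract (christoffel g ginv) ginv P x e a b
    (fun a b => S.hgid x a b) (fun a b => S.hPd x a b)
  have h2 : cov11 (christoffel g ginv) (mixUp ginv P) x e a b
      = ∑ c, (cov20 (christoffel g ginv) ginv x e a c * P x c b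
          + ginv x a c * cov2 (christoffel g ginv) P x e c b) := h
  rw [h2]
  simp only [S.covginv, zero_mul, zero_add, NM, Nt]

theorem cov11_Qm (S : Setup g ginv P Q) (x : Pt n) (e a b : Fin n) :
    cov11 (christoffel g ginv) (mixUp ginv Q) x e a b = - NM g ginv P x e a b := by
  have h2 : cov11 (christoffel g ginv) (mixUp ginv Q) x e a b
      = ∑ c, (cov20 (christoffel g ginv) ginv x e a c * Q x c b
          + ginv x a c * cov2 (christoffel g ginv) Q x e c b) :=
    cov11_contract (christoffel g ginv) ginv Q x e a b
      (fun a b => S.hgid x a b) (fun a b => S.hQd x a b)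
  rw [h2]
  simp only [S.covginv, zero_mul, zero_add, S.covQ, NM, Nt, mul_neg, Finset.sum_neg_distrib]

/-- `∇_e P^{ab} = NM_{e a d} g^{db}`. -/
theorem cov20_Pu (S : Setup g ginv P Q) (x : Pt n) (e a b : Fin n) :
    cov20 (christoffel g ginv) (up2 ginv P) x e a b
      = ∑ d, NM g ginv P x e a d * ginv x d b := by
  have hfun : up2 ginv P = fun y a b => ∑ d, mixUp ginv P y a d * ginv y d b := by
    funext y a b
    simp only [up2, mixUp]
    rw [Finset.sum_comm]
    refine Finset.sum_congr rfl fun d _ => ?_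
    rw [Finset.sum_mul]
    refine Finset.sum_congr rfl fun c _ => ?_
    rw [S.hgis y b d]
    ring
  rw [hfun]
  have h2 : cov20 (christoffel g ginv) (fun y a b => ∑ d, mixUp ginv P y a d * ginv y d b) x e a b
      = ∑ d, (cov11 (christoffel g ginv) (mixUp ginv P) x e a d * ginv x d b
          + mixUp ginv P x a d * cov20 (christoffel g ginv) ginv x e d b) :=
    cov20_contract (christoffel g ginv) (mixUp ginv P) ginv x e a b
      (fun a b => S.hPmd x a b) (fun a b => S.hgid x a b)
  rw [h2]
  simp only [S.covginv, mul_zero, add_zero, S.cov11_Pm]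

theorem cov20_Qu (S : Setup g ginv P Q) (x : Pt n) (e a b : Fin n) :
    cov20 (christoffel g ginv) (up2 ginv Q) x e a b
      = - ∑ d, NM g ginv P x e a d * ginv x d b := by
  have hfun : up2 ginv Q = fun y a b => ∑ d, mixUp ginv Q y a d * ginv y d b := by
    funext y a b
    simp only [up2, mixUp]
    rw [Finset.sum_comm]
    refine Finset.sum_congr rfl fun d _ => ?_
    rw [Finset.sum_mul]
    refine Finset.sum_congr rfl fun c _ => ?_
    rw [S.hgis y b d]
    ring
  rw [hfun]
  have h2 : cov20 (christoffel g ginv) (fun y a b => ∑ d, mixUp ginv Q y a d * ginv y d b) x e a b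
      = ∑ d, (cov11 (christoffel g ginv) (mixUp ginv Q) x e a d * ginv x d b
          + mixUp ginv Q x a d * cov20 (christoffel g ginv) ginv x e d b) :=
    cov20_contract (christoffel g ginv) (mixUp ginv Q) ginv x e a b
      (fun a b => S.hQmd x a b) (fun a b => S.hgid x a b)
  rw [h2]
  simp only [S.covginv, mul_zero, add_zero, S.cov11_Qm]
  simp [Finset.sum_neg_distrib]

/-- Differentiated projector identity: `∇P·Pm + P·∇Pm = ∇P`. -/
theorem Dconstraint (S : Setup g ginv P Q) (x : Pt n) (e a b : Fin n) :
    (∑ c, Nt g ginv P x e a c * mixUp ginv P x c b)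
      + (∑ c, P x a c * NM g ginv P x e c b) = Nt g ginv P x e a b := by
  have hfun : P = fun y a b => ∑ c, P y a c * mixUp ginv P y c b := by
    funext y a b; exact (S.hPP y a b).symm
  have h2 : cov2 (christoffel g ginv) (fun y a b => ∑ c, P y a c * mixUp ginv P y c b) x e a b
      = ∑ c, (cov2 (christoffel g ginv) P x e a c * mixUp ginv P x c b
          + P x a c * cov11 (christoffel g ginv) (mixUp ginv P) x e c b) :=
    cov2_contract (christoffel g ginv) P (mixUp ginv P) x e a b
      (fun a b => S.hPd x a b) (fun a b => S.hPmd x a b)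
  have h3 : Nt g ginv P x e a b
      = ∑ c, (Nt g ginv P x e a c * mixUp ginv P x c b + P x a c * NM g ginv P x e c b) := by
    conv_lhs => rw [Nt, hfun]
    rw [h2]
    simp only [S.cov11_Pm, Nt]
  rw [h3, Finset.sum_add_distrib]

/-- Trace of `∇P^a_b` vanishes (constancy of the trace). -/
theorem NMtrace (S : Setup g ginv P Q) (k : ℝ) (htr : ∀ y, (∑ a, mixUp ginv P y a a) = k)
    (x : Pt n) (e : Fin n) : (∑ a, NM g ginv P x e a a) = 0 := by
  have h1 : ∀ a : Fin n, NM g ginv P x e a a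
      = cov11 (christoffel g ginv) (mixUp ginv P) x e a a :=
    fun a => (S.cov11_Pm x e a a).symm
  simp only [h1, cov11]
  simp only [Finset.sum_sub_distrib, Finset.sum_add_distrib]
  have hpd : (∑ a, pd e (fun y => mixUp ginv P y a a) x) = 0 := by
    rw [← pd_sum e Finset.univ (fun a y => mixUp ginv P y a a) (fun a _ => S.hPmd x a a)]
    rw [pd_congr (funext htr) e x, pd_const]
  rw [hpd]
  rw [sum2_swap (fun a r => christoffel g ginv x a e r * mixUp ginv P x r a)
    (fun a r => christoffel g ginv x r e a * mixUp ginv P x a r) (fun a r => by ring)]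
  ring

end Setup
namespace Setup
variable {n : ℕ} {g ginv P Q : Ten2 n}

theorem sum_factor (A : Fin n → Fin n → ℝ) (B : Fin n → ℝ) :
    (∑ c, (∑ r, A r c) * B c) = ∑ r, ∑ c, A r c * B c := by
  rw [show (∑ c, (∑ r, A r c) * B c) = ∑ c, ∑ r, A r c * B c from
    Finset.sum_congr rfl fun c _ => Finset.sum_mul _ _ _]
  exact Finset.sum_comm

theorem PmQm_del (S : Setup g ginv P Q) (x : Pt n) (a b : Fin n) :
    mixUp ginv P x a b + mixUp ginv Q x a b = if a = b then (1:ℝ) else 0 := by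
  simp only [mixUp]
  rw [← Finset.sum_add_distrib, ← S.hdel' x a b]
  exact Finset.sum_congr rfl fun c _ => by rw [← S.hPQ x c b]; ring

theorem Qm_eq (S : Setup g ginv P Q) (x : Pt n) (a b : Fin n) :
    mixUp ginv Q x a b = (if a = b then (1:ℝ) else 0) - mixUp ginv P x a b := by
  have := S.PmQm_del x a b; linarith

theorem PmPm (S : Setup g ginv P Q) (x : Pt n) (a b : Fin n) :
    (∑ c, mixUp ginv P x a c * mixUp ginv P x c b) = mixUp ginv P x a b := by
  calc (∑ c, mixUp ginv P x a c * mixUp ginv P x c b)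
      = ∑ c, (∑ r, ginv x a r * P x r c) * mixUp ginv P x c b := rfl
    _ = ∑ r, ∑ c, (ginv x a r * P x r c) * mixUp ginv P x c b := sum_factor _ _
    _ = ∑ r, ginv x a r * (∑ c, P x r c * mixUp ginv P x c b) := by
        refine Finset.sum_congr rfl fun r _ => ?_
        rw [Finset.mul_sum]
        exact Finset.sum_congr rfl fun c _ => by ring
    _ = ∑ r, ginv x a r * P x r b := by simp only [S.hPP]
    _ = mixUp ginv P x a b := rfl

theorem PmQm (S : Setup g ginv P Q) (x : Pt n) (a b : Fin n) :
    (∑ c, mixUp ginv P x a c * mixUp ginv Q x c b) = 0 := by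
  calc (∑ c, mixUp ginv P x a c * mixUp ginv Q x c b)
      = ∑ c, (∑ r, ginv x a r * P x r c) * mixUp ginv Q x c b := rfl
    _ = ∑ r, ∑ c, (ginv x a r * P x r c) * mixUp ginv Q x c b := sum_factor _ _
    _ = ∑ r, ginv x a r * (∑ c, P x r c * mixUp ginv Q x c b) := by
        refine Finset.sum_congr rfl fun r _ => ?_
        rw [Finset.mul_sum]
        exact Finset.sum_congr rfl fun c _ => by ring
    _ = 0 := by simp only [S.hPQ0, mul_zero, Finset.sum_const_zero]

theorem QmPm (S : Setup g ginv P Q) (x : Pt n) (a b : Fin n) :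
    (∑ c, mixUp ginv Q x a c * mixUp ginv P x c b) = 0 := by
  simp only [S.Qm_eq x a, sub_mul, Finset.sum_sub_distrib, S.PmPm, ite_mul, one_mul, zero_mul]
  simp

theorem QmQm (S : Setup g ginv P Q) (x : Pt n) (a b : Fin n) :
    (∑ c, mixUp ginv Q x a c * mixUp ginv Q x c b) = mixUp ginv Q x a b := by
  simp only [S.Qm_eq x a, sub_mul, Finset.sum_sub_distrib, S.PmQm, ite_mul, one_mul, zero_mul]
  simp [S.Qm_eq x a b]

/-- `P^{ab} = P^a_d g^{db}`. -/
theorem Pu_eq (S : Setup g ginv P Q) (x : Pt n) (a b : Fin n) :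
    up2 ginv P x a b = ∑ d, mixUp ginv P x a d * ginv x d b := by
  simp only [up2, mixUp]
  rw [Finset.sum_comm]
  refine Finset.sum_congr rfl fun d _ => ?_
  rw [Finset.sum_mul]
  refine Finset.sum_congr rfl fun c _ => ?_
  rw [S.hgis x b d]
  ring

/-- `P^{ab} = g^{ac} P^b_c`. -/
theorem Pu_eq' (S : Setup g ginv P Q) (x : Pt n) (a b : Fin n) :
    up2 ginv P x a b = ∑ c, ginv x a c * mixUp ginv P x b c := by
  simp only [up2, mixUp]
  refine Finset.sum_congr rfl fun c _ => ?_
  rw [Finset.mul_sum]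
  refine Finset.sum_congr rfl fun d _ => ?_
  rw [S.hPs x d c]
  ring

theorem Pusym (S : Setup g ginv P Q) (x : Pt n) (a b : Fin n) :
    up2 ginv P x a b = up2 ginv P x b a := by
  simp only [up2]
  rw [Finset.sum_comm]
  refine Finset.sum_congr rfl fun c _ => Finset.sum_congr rfl fun d _ => ?_
  rw [S.hPs x d c]
  ring

theorem Qu_sub (S : Setup g ginv P Q) (x : Pt n) (a b : Fin n) :
    up2 ginv Q x a b = ginv x a b - up2 ginv P x a b := by
  have hgg : (∑ c, ∑ d, ginv x a c * ginv x b d * g x c d) = ginv x a b := by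
    calc (∑ c, ∑ d, ginv x a c * ginv x b d * g x c d)
        = ∑ c, ginv x a c * (∑ d, g x c d * ginv x d b) := by
          refine Finset.sum_congr rfl fun c _ => ?_
          rw [Finset.mul_sum]
          refine Finset.sum_congr rfl fun d _ => ?_
          rw [S.hgis x b d]; ring
      _ = ∑ c, ginv x a c * (if c = b then 1 else 0) := by simp only [S.hdel]
      _ = ginv x a b := sum_delta_r' _ b
  calc up2 ginv Q x a b
      = ∑ c, ∑ d, ginv x a c * ginv x b d * (g x c d - P x c d) := by
        simp only [up2]
        refine Finset.sum_congr rfl fun c _ => Finset.sum_congr rfl fun d _ => ?_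
        rw [show Q x c d = g x c d - P x c d from by have := S.hPQ x c d; linarith]
    _ = _ := by
        simp only [mul_sub, Finset.sum_sub_distrib, hgg]
        rfl

theorem Qusym (S : Setup g ginv P Q) (x : Pt n) (a b : Fin n) :
    up2 ginv Q x a b = up2 ginv Q x b a := by
  rw [S.Qu_sub, S.Qu_sub, S.hgis x a b, S.Pusym x a b]

theorem Qu_eq (S : Setup g ginv P Q) (x : Pt n) (a b : Fin n) :
    up2 ginv Q x a b = ∑ d, mixUp ginv Q x a d * ginv x d b := by
  rw [S.Qu_sub]
  simp only [S.Qm_eq x a, sub_mul, Finset.sum_sub_distrib, ← S.Pu_eq, ite_mul, one_mul, zero_mul]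
  simp

theorem Qu_eq' (S : Setup g ginv P Q) (x : Pt n) (a b : Fin n) :
    up2 ginv Q x a b = ∑ c, ginv x a c * mixUp ginv Q x b c := by
  rw [S.Qu_sub]
  simp only [S.Qm_eq x b, mul_sub, Finset.sum_sub_distrib, ← S.Pu_eq', mul_ite, mul_one, mul_zero]
  simp

theorem PuPmT (S : Setup g ginv P Q) (x : Pt n) (a b : Fin n) :
    (∑ d, up2 ginv P x a d * mixUp ginv P x b d) = up2 ginv P x a b := by
  calc (∑ d, up2 ginv P x a d * mixUp ginv P x b d)
      = ∑ d, (∑ c, ginv x a c * mixUp ginv P x d c) * mixUp ginv P x b d := by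
        simp only [S.Pu_eq']
    _ = ∑ c, ∑ d, (ginv x a c * mixUp ginv P x d c) * mixUp ginv P x b d := sum_factor _ _
    _ = ∑ c, ginv x a c * (∑ d, mixUp ginv P x b d * mixUp ginv P x d c) := by
        refine Finset.sum_congr rfl fun c _ => ?_
        rw [Finset.mul_sum]
        exact Finset.sum_congr rfl fun d _ => by ring
    _ = ∑ c, ginv x a c * mixUp ginv P x b c := by simp only [S.PmPm]
    _ = up2 ginv P x a b := (S.Pu_eq' x a b).symm

theorem PuQmT (S : Setup g ginv P Q) (x : Pt n) (a b : Fin n) :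
    (∑ d, up2 ginv P x a d * mixUp ginv Q x b d) = 0 := by
  calc (∑ d, up2 ginv P x a d * mixUp ginv Q x b d)
      = ∑ d, (∑ c, ginv x a c * mixUp ginv P x d c) * mixUp ginv Q x b d := by
        simp only [S.Pu_eq']
    _ = ∑ c, ∑ d, (ginv x a c * mixUp ginv P x d c) * mixUp ginv Q x b d := sum_factor _ _
    _ = ∑ c, ginv x a c * (∑ d, mixUp ginv Q x b d * mixUp ginv P x d c) := by
        refine Finset.sum_congr rfl fun c _ => ?_
        rw [Finset.mul_sum]
        exact Finset.sum_congr rfl fun d _ => by ring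
    _ = 0 := by simp only [S.QmPm, mul_zero, Finset.sum_const_zero]

theorem QuPmT (S : Setup g ginv P Q) (x : Pt n) (a b : Fin n) :
    (∑ d, up2 ginv Q x a d * mixUp ginv P x b d) = 0 := by
  simp only [S.Qu_sub, sub_mul, Finset.sum_sub_distrib, S.PuPmT]
  rw [show (∑ d, ginv x a d * mixUp ginv P x b d) = up2 ginv P x a b from (S.Pu_eq' x a b).symm]
  ring

theorem QuQmT (S : Setup g ginv P Q) (x : Pt n) (a b : Fin n) :
    (∑ d, up2 ginv Q x a d * mixUp ginv Q x b d) = up2 ginv Q x a b := by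
  simp only [S.Qu_sub, sub_mul, Finset.sum_sub_distrib, S.PuQmT]
  rw [show (∑ d, ginv x a d * mixUp ginv Q x b d) = up2 ginv Q x a b from by
    rw [S.Qu_eq' x a b]]
  rw [S.Qu_sub]
  ring

end Setup
namespace Setup
variable {n : ℕ} {g ginv P Q : Ten2 n}

/-- `(PmᵀN)_{ab} = ∑_c P_{ac} NM_{ecb}`. -/
theorem PT_eq (S : Setup g ginv P Q) (x : Pt n) (e a b : Fin n) :
    (∑ r, mixUp ginv P x r a * Nt g ginv P x e r b)
      = ∑ c, P x a c * NM g ginv P x e c b := by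
  calc (∑ r, mixUp ginv P x r a * Nt g ginv P x e r b)
      = ∑ r, (∑ c, ginv x r c * P x c a) * Nt g ginv P x e r b := rfl
    _ = ∑ c, ∑ r, (ginv x r c * P x c a) * Nt g ginv P x e r b := sum_factor _ _
    _ = ∑ c, P x a c * (∑ r, ginv x c r * Nt g ginv P x e r b) := by
        refine Finset.sum_congr rfl fun c _ => ?_
        rw [Finset.mul_sum]
        refine Finset.sum_congr rfl fun r _ => ?_
        rw [S.hgis x c r, S.hPs x a c]
        ring
    _ = _ := rfl

/-- The constraint `(D)` in sandwich form: `N·Pm + PmᵀN = N`. -/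
theorem DconsPT (S : Setup g ginv P Q) (x : Pt n) (e a b : Fin n) :
    (∑ c, Nt g ginv P x e a c * mixUp ginv P x c b)
      + (∑ r, mixUp ginv P x r a * Nt g ginv P x e r b) = Nt g ginv P x e a b := by
  rw [S.PT_eq]
  exact S.Dconstraint x e a b

/-- `Pmᵀ N Pm = 0`. -/
theorem PNP (S : Setup g ginv P Q) (x : Pt n) (e d b : Fin n) :
    (∑ a, ∑ c, mixUp ginv P x a d * Nt g ginv P x e a c * mixUp ginv P x c b) = 0 := by
  have key : ∀ a, (∑ c, Nt g ginv P x e a c * mixUp ginv P x c b)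
      = Nt g ginv P x e a b - ∑ r, mixUp ginv P x r a * Nt g ginv P x e r b := by
    intro a; have := S.DconsPT x e a b; linarith
  have expand : (∑ a, mixUp ginv P x a d * (∑ c, Nt g ginv P x e a c * mixUp ginv P x c b))
      = (∑ a, mixUp ginv P x a d * Nt g ginv P x e a b)
        - ∑ a, mixUp ginv P x a d * ∑ r, mixUp ginv P x r a * Nt g ginv P x e r b := by
    rw [← Finset.sum_sub_distrib]
    exact Finset.sum_congr rfl fun a _ => by rw [key a]; ring
  have h2 : (∑ a, mixUp ginv P x a d * ∑ r, mixUp ginv P x r a * Nt g ginv P x e r b)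
      = ∑ a, mixUp ginv P x a d * Nt g ginv P x e a b := by
    calc (∑ a, mixUp ginv P x a d * ∑ r, mixUp ginv P x r a * Nt g ginv P x e r b)
        = ∑ a, ∑ r, mixUp ginv P x a d * (mixUp ginv P x r a * Nt g ginv P x e r b) := by
          exact Finset.sum_congr rfl fun a _ => Finset.mul_sum _ _ _
      _ = ∑ r, ∑ a, mixUp ginv P x a d * (mixUp ginv P x r a * Nt g ginv P x e r b) :=
          Finset.sum_comm
      _ = ∑ r, (∑ a, mixUp ginv P x r a * mixUp ginv P x a d) * Nt g ginv P x e r b := by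
          refine Finset.sum_congr rfl fun r _ => ?_
          rw [Finset.sum_mul]
          exact Finset.sum_congr rfl fun a _ => by ring
      _ = ∑ r, mixUp ginv P x r d * Nt g ginv P x e r b := by simp only [S.PmPm]
      _ = _ := by
          refine Finset.sum_congr rfl fun r _ => by ring
  calc (∑ a, ∑ c, mixUp ginv P x a d * Nt g ginv P x e a c * mixUp ginv P x c b)
      = ∑ a, mixUp ginv P x a d * (∑ c, Nt g ginv P x e a c * mixUp ginv P x c b) := by
        refine Finset.sum_congr rfl fun a _ => ?_
        rw [Finset.mul_sum]
        exact Finset.sum_congr rfl fun c _ => by ring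
    _ = 0 := by rw [expand, h2]; ring

/-- `Qmᵀ N Qm = 0`. -/
theorem QNQ (S : Setup g ginv P Q) (x : Pt n) (e d b : Fin n) :
    (∑ a, ∑ c, mixUp ginv Q x a d * Nt g ginv P x e a c * mixUp ginv Q x c b) = 0 := by
  have key : ∀ a, (∑ c, Nt g ginv P x e a c * mixUp ginv P x c b)
      = Nt g ginv P x e a b - ∑ r, mixUp ginv P x r a * Nt g ginv P x e r b := by
    intro a; have := S.DconsPT x e a b; linarith
  -- QmᵀN Pm = QmᵀN :
  have h1 : (∑ a, ∑ c, mixUp ginv Q x a d * Nt g ginv P x e a c * mixUp ginv P x c b)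
      = ∑ a, mixUp ginv Q x a d * Nt g ginv P x e a b := by
    calc (∑ a, ∑ c, mixUp ginv Q x a d * Nt g ginv P x e a c * mixUp ginv P x c b)
        = ∑ a, mixUp ginv Q x a d * (∑ c, Nt g ginv P x e a c * mixUp ginv P x c b) := by
          refine Finset.sum_congr rfl fun a _ => ?_
          rw [Finset.mul_sum]
          exact Finset.sum_congr rfl fun c _ => by ring
      _ = (∑ a, mixUp ginv Q x a d * Nt g ginv P x e a b)
          - ∑ a, mixUp ginv Q x a d * ∑ r, mixUp ginv P x r a * Nt g ginv P x e r b := by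
          rw [← Finset.sum_sub_distrib]
          exact Finset.sum_congr rfl fun a _ => by rw [key a]; ring
      _ = _ := by
          have hz : (∑ a, mixUp ginv Q x a d * ∑ r, mixUp ginv P x r a * Nt g ginv P x e r b)
              = 0 := by
            calc (∑ a, mixUp ginv Q x a d * ∑ r, mixUp ginv P x r a * Nt g ginv P x e r b)
                = ∑ a, ∑ r, mixUp ginv Q x a d * (mixUp ginv P x r a * Nt g ginv P x e r b) :=
                  Finset.sum_congr rfl fun a _ => Finset.mul_sum _ _ _
              _ = ∑ r, ∑ a, mixUp ginv Q x a d * (mixUp ginv P x r a * Nt g ginv P x e r b) :=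
                  Finset.sum_comm
              _ = ∑ r, (∑ a, mixUp ginv P x r a * mixUp ginv Q x a d) * Nt g ginv P x e r b := by
                  refine Finset.sum_congr rfl fun r _ => ?_
                  rw [Finset.sum_mul]
                  exact Finset.sum_congr rfl fun a _ => by ring
              _ = 0 := by simp only [S.PmQm, zero_mul, Finset.sum_const_zero]
          rw [hz]; ring
  -- now expand Qm on the right as δ - Pm
  calc (∑ a, ∑ c, mixUp ginv Q x a d * Nt g ginv P x e a c * mixUp ginv Q x c b)
      = (∑ a, mixUp ginv Q x a d * Nt g ginv P x e a b)
        - ∑ a, ∑ c, mixUp ginv Q x a d * Nt g ginv P x e a c * mixUp ginv P x c b := by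
        rw [← Finset.sum_sub_distrib]
        refine Finset.sum_congr rfl fun a _ => ?_
        calc (∑ c, mixUp ginv Q x a d * Nt g ginv P x e a c * mixUp ginv Q x c b)
            = ∑ c, (mixUp ginv Q x a d * Nt g ginv P x e a c * (if c = b then (1:ℝ) else 0)
                - mixUp ginv Q x a d * Nt g ginv P x e a c * mixUp ginv P x c b) := by
              refine Finset.sum_congr rfl fun c _ => ?_
              rw [S.Qm_eq x c b]
              ring
          _ = _ := by
              rw [Finset.sum_sub_distrib, sum_delta_r' (fun c => mixUp ginv Q x a d
                * Nt g ginv P x e a c) b]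
    _ = 0 := by rw [h1]; ring

/-- `tr(g⁻¹ N_e) = 0` in the orientation `∑_{a,b} g^{ab} N_{eab}`. -/
theorem trgiN (S : Setup g ginv P Q) (k : ℝ) (htr : ∀ y, (∑ a, mixUp ginv P y a a) = k)
    (x : Pt n) (e : Fin n) :
    (∑ a, ∑ b, ginv x a b * Nt g ginv P x e a b) = 0 := by
  have h := S.NMtrace k htr x e
  calc (∑ a, ∑ b, ginv x a b * Nt g ginv P x e a b)
      = ∑ a, NM g ginv P x e a a := by
        refine Finset.sum_congr rfl fun a _ => ?_
        simp only [NM]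
        refine Finset.sum_congr rfl fun b _ => ?_
        rw [S.Nsym x e a b]
    _ = 0 := h

/-- `tr(P^{··} N_e) = 0`. -/
theorem trPuN (S : Setup g ginv P Q) (x : Pt n) (e : Fin n) :
    (∑ a, ∑ b, up2 ginv P x a b * Nt g ginv P x e a b) = 0 := by
  have key : ∀ a b, Nt g ginv P x e a b
      = (∑ c, Nt g ginv P x e a c * mixUp ginv P x c b)
        + ∑ r, mixUp ginv P x r a * Nt g ginv P x e r b :=
    fun a b => (S.DconsPT x e a b).symm
  have t1 : (∑ a, ∑ b, up2 ginv P x a b * (∑ c, Nt g ginv P x e a c * mixUp ginv P x c b))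
      = ∑ a, ∑ b, up2 ginv P x a b * Nt g ginv P x e a b := by
    calc (∑ a, ∑ b, up2 ginv P x a b * (∑ c, Nt g ginv P x e a c * mixUp ginv P x c b))
        = ∑ a, ∑ c, (∑ b, up2 ginv P x a b * mixUp ginv P x c b) * Nt g ginv P x e a c := by
          refine Finset.sum_congr rfl fun a _ => ?_
          simp only [Finset.mul_sum]
          rw [Finset.sum_comm]
          refine Finset.sum_congr rfl fun c _ => ?_
          rw [Finset.sum_mul]
          exact Finset.sum_congr rfl fun b _ => by ring
      _ = ∑ a, ∑ c, up2 ginv P x a c * Nt g ginv P x e a c := by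
          simp only [S.PuPmT]
  have t2 : (∑ a, ∑ b, up2 ginv P x a b * (∑ r, mixUp ginv P x r a * Nt g ginv P x e r b))
      = ∑ a, ∑ b, up2 ginv P x a b * Nt g ginv P x e a b := by
    calc (∑ a, ∑ b, up2 ginv P x a b * (∑ r, mixUp ginv P x r a * Nt g ginv P x e r b))
        = ∑ b, ∑ a, up2 ginv P x a b * (∑ r, mixUp ginv P x r a * Nt g ginv P x e r b) :=
          Finset.sum_comm
      _ = ∑ b, ∑ r, (∑ a, up2 ginv P x b a * mixUp ginv P x r a) * Nt g ginv P x e r b := by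
          refine Finset.sum_congr rfl fun b _ => ?_
          simp only [Finset.mul_sum]
          rw [Finset.sum_comm]
          refine Finset.sum_congr rfl fun r _ => ?_
          rw [Finset.sum_mul]
          refine Finset.sum_congr rfl fun a _ => ?_
          rw [S.Pusym x a b]
          ring
      _ = ∑ b, ∑ r, up2 ginv P x b r * Nt g ginv P x e r b := by
          simp only [S.PuPmT]
      _ = ∑ r, ∑ b, up2 ginv P x r b * Nt g ginv P x e r b := by
          rw [Finset.sum_comm]
          exact Finset.sum_congr rfl fun b _ => Finset.sum_congr rfl fun r _ => by
            rw [S.Pusym x b r]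
  have expand : (∑ a, ∑ b, up2 ginv P x a b * Nt g ginv P x e a b)
      = (∑ a, ∑ b, up2 ginv P x a b * (∑ c, Nt g ginv P x e a c * mixUp ginv P x c b))
        + ∑ a, ∑ b, up2 ginv P x a b * (∑ r, mixUp ginv P x r a * Nt g ginv P x e r b) := by
    rw [← Finset.sum_add_distrib]
    refine Finset.sum_congr rfl fun a _ => ?_
    rw [← Finset.sum_add_distrib]
    refine Finset.sum_congr rfl fun b _ => ?_
    rw [key a b]
    ring
  rw [t1, t2] at expand
  linarith

theorem trQuN (S : Setup g ginv P Q) (k : ℝ) (htr : ∀ y, (∑ a, mixUp ginv P y a a) = k)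
    (x : Pt n) (e : Fin n) :
    (∑ a, ∑ b, up2 ginv Q x a b * Nt g ginv P x e a b) = 0 := by
  have h1 := S.trgiN k htr x e
  have h2 := S.trPuN x e
  calc (∑ a, ∑ b, up2 ginv Q x a b * Nt g ginv P x e a b)
      = (∑ a, ∑ b, ginv x a b * Nt g ginv P x e a b)
        - ∑ a, ∑ b, up2 ginv P x a b * Nt g ginv P x e a b := by
        rw [← Finset.sum_sub_distrib]
        refine Finset.sum_congr rfl fun a _ => ?_
        rw [← Finset.sum_sub_distrib]
        refine Finset.sum_congr rfl fun b _ => ?_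
        rw [S.Qu_sub x a b]
        ring
    _ = 0 := by rw [h1, h2]; ring

/-- `E_a = 2 N_{cab} P^{cb}`. -/
theorem E_eq (S : Setup g ginv P Q) (x : Pt n) (a : Fin n) :
    Eform g ginv P x a = 2 * ∑ c, ∑ b, Nt g ginv P x c a b * up2 ginv P x c b := by
  have h0 : Eform g ginv P x a = ∑ c, ∑ b, (Nt g ginv P x c a b + Nt g ginv P x b a c
      - Nt g ginv P x a c b) * up2 ginv P x c b := by
    refine Finset.sum_congr rfl fun c _ => Finset.sum_congr rfl fun b _ => ?_
    rw [Mtens_eq]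
  have h1 : (∑ c, ∑ b, Nt g ginv P x b a c * up2 ginv P x c b)
      = ∑ c, ∑ b, Nt g ginv P x c a b * up2 ginv P x c b := by
    rw [sum2_swap (fun c b => Nt g ginv P x b a c * up2 ginv P x c b)
      (fun c b => Nt g ginv P x c a b * up2 ginv P x b c) (fun c b => by ring)]
    exact Finset.sum_congr rfl fun c _ => Finset.sum_congr rfl fun b _ => by
      rw [S.Pusym x b c]
  have h2 : (∑ c, ∑ b, Nt g ginv P x a c b * up2 ginv P x c b) = 0 := by
    rw [← S.trPuN x a]
    exact Finset.sum_congr rfl fun c _ => Finset.sum_congr rfl fun b _ => by ring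
  rw [h0]
  simp only [add_mul, sub_mul, Finset.sum_add_distrib, Finset.sum_sub_distrib]
  rw [h1, h2]
  ring

/-- `W_a = -2 N_{cab} Π^{cb}`. -/
theorem W_eq (S : Setup g ginv P Q) (k : ℝ) (htr : ∀ y, (∑ a, mixUp ginv P y a a) = k)
    (x : Pt n) (a : Fin n) :
    Wform g ginv P Q x a = -2 * ∑ c, ∑ b, Nt g ginv P x c a b * up2 ginv Q x c b := by
  have h0 : Wform g ginv P Q x a = -∑ c, ∑ b, (Nt g ginv P x c a b + Nt g ginv P x b a c
      - Nt g ginv P x a c b) * up2 ginv Q x c b := by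
    rw [Wform, neg_inj]
    refine Finset.sum_congr rfl fun c _ => Finset.sum_congr rfl fun b _ => ?_
    rw [Mtens_eq]
  have h1 : (∑ c, ∑ b, Nt g ginv P x b a c * up2 ginv Q x c b)
      = ∑ c, ∑ b, Nt g ginv P x c a b * up2 ginv Q x c b := by
    rw [sum2_swap (fun c b => Nt g ginv P x b a c * up2 ginv Q x c b)
      (fun c b => Nt g ginv P x c a b * up2 ginv Q x b c) (fun c b => by ring)]
    exact Finset.sum_congr rfl fun c _ => Finset.sum_congr rfl fun b _ => by
      rw [S.Qusym x b c]
  have h2 : (∑ c, ∑ b, Nt g ginv P x a c b * up2 ginv Q x c b) = 0 := by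
    rw [← S.trQuN k htr x a]
    exact Finset.sum_congr rfl fun c _ => Finset.sum_congr rfl fun b _ => by ring
  rw [h0]
  simp only [add_mul, sub_mul, Finset.sum_add_distrib, Finset.sum_sub_distrib]
  rw [h1, h2]
  ring

end Setup
namespace Setup
variable {n : ℕ} {g ginv P Q : Ten2 n}

theorem sum_rot (f : Fin n → Fin n → Fin n → ℝ) :
    (∑ a, ∑ c, ∑ v, f a c v) = ∑ c, ∑ v, ∑ a, f a c v := by
  rw [Finset.sum_comm]
  exact Finset.sum_congr rfl fun c _ => Finset.sum_comm

/-- `∑_{v,a} N_{cav} P^{cv} P^a_u = 0`. -/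
theorem NPuPm (S : Setup g ginv P Q) (x : Pt n) (c u : Fin n) :
    (∑ v, ∑ a, (Nt g ginv P x c a v * up2 ginv P x c v) * mixUp ginv P x a u) = 0 := by
  calc (∑ v, ∑ a, (Nt g ginv P x c a v * up2 ginv P x c v) * mixUp ginv P x a u)
      = ∑ v, (∑ w, mixUp ginv P x v w * ginv x w c)
          * (∑ a, Nt g ginv P x c a v * mixUp ginv P x a u) := by
        refine Finset.sum_congr rfl fun v _ => ?_
        rw [← S.Pu_eq x v c, ← S.Pusym x c v, Finset.mul_sum]
        exact Finset.sum_congr rfl fun a _ => by ring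
    _ = ∑ w, ∑ v, (mixUp ginv P x v w * ginv x w c)
          * (∑ a, Nt g ginv P x c a v * mixUp ginv P x a u) := sum_factor _ _
    _ = ∑ w, ginv x w c * (∑ a, ∑ v, mixUp ginv P x a u * Nt g ginv P x c a v
          * mixUp ginv P x v w) := by
        refine Finset.sum_congr rfl fun w _ => ?_
        calc (∑ v, (mixUp ginv P x v w * ginv x w c)
              * (∑ a, Nt g ginv P x c a v * mixUp ginv P x a u))
            = ∑ v, ∑ a, ginv x w c * (mixUp ginv P x a u * Nt g ginv P x c a v
                * mixUp ginv P x v w) := by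
              refine Finset.sum_congr rfl fun v _ => ?_
              rw [Finset.mul_sum]
              exact Finset.sum_congr rfl fun a _ => by ring
          _ = ∑ a, ∑ v, ginv x w c * (mixUp ginv P x a u * Nt g ginv P x c a v
                * mixUp ginv P x v w) := Finset.sum_comm
          _ = ginv x w c * (∑ a, ∑ v, mixUp ginv P x a u * Nt g ginv P x c a v
                * mixUp ginv P x v w) := by
              rw [Finset.mul_sum]
              exact Finset.sum_congr rfl fun a _ => (Finset.mul_sum _ _ _).symm
    _ = 0 := by simp only [S.PNP, mul_zero, Finset.sum_const_zero]

/-- `∑_{v,a} N_{cav} Π^{cv} Π^a_u = 0`. -/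
theorem NQuQm (S : Setup g ginv P Q) (x : Pt n) (c u : Fin n) :
    (∑ v, ∑ a, (Nt g ginv P x c a v * up2 ginv Q x c v) * mixUp ginv Q x a u) = 0 := by
  calc (∑ v, ∑ a, (Nt g ginv P x c a v * up2 ginv Q x c v) * mixUp ginv Q x a u)
      = ∑ v, (∑ w, mixUp ginv Q x v w * ginv x w c)
          * (∑ a, Nt g ginv P x c a v * mixUp ginv Q x a u) := by
        refine Finset.sum_congr rfl fun v _ => ?_
        rw [← S.Qu_eq x v c, ← S.Qusym x c v, Finset.mul_sum]
        exact Finset.sum_congr rfl fun a _ => by ring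
    _ = ∑ w, ∑ v, (mixUp ginv Q x v w * ginv x w c)
          * (∑ a, Nt g ginv P x c a v * mixUp ginv Q x a u) := sum_factor _ _
    _ = ∑ w, ginv x w c * (∑ a, ∑ v, mixUp ginv Q x a u * Nt g ginv P x c a v
          * mixUp ginv Q x v w) := by
        refine Finset.sum_congr rfl fun w _ => ?_
        calc (∑ v, (mixUp ginv Q x v w * ginv x w c)
              * (∑ a, Nt g ginv P x c a v * mixUp ginv Q x a u))
            = ∑ v, ∑ a, ginv x w c * (mixUp ginv Q x a u * Nt g ginv P x c a v
                * mixUp ginv Q x v w) := by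
              refine Finset.sum_congr rfl fun v _ => ?_
              rw [Finset.mul_sum]
              exact Finset.sum_congr rfl fun a _ => by ring
          _ = ∑ a, ∑ v, ginv x w c * (mixUp ginv Q x a u * Nt g ginv P x c a v
                * mixUp ginv Q x v w) := Finset.sum_comm
          _ = ginv x w c * (∑ a, ∑ v, mixUp ginv Q x a u * Nt g ginv P x c a v
                * mixUp ginv Q x v w) := by
              rw [Finset.mul_sum]
              exact Finset.sum_congr rfl fun a _ => (Finset.mul_sum _ _ _).symm
    _ = 0 := by simp only [S.QNQ, mul_zero, Finset.sum_const_zero]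

/-- `E_a P^a_u = 0`. -/
theorem EPm (S : Setup g ginv P Q) (x : Pt n) (u : Fin n) :
    (∑ a, Eform g ginv P x a * mixUp ginv P x a u) = 0 := by
  simp only [S.E_eq]
  calc (∑ a, (2 * ∑ c, ∑ v, Nt g ginv P x c a v * up2 ginv P x c v) * mixUp ginv P x a u)
      = 2 * ∑ a, ∑ c, ∑ v, (Nt g ginv P x c a v * up2 ginv P x c v) * mixUp ginv P x a u := by
        rw [Finset.mul_sum]
        refine Finset.sum_congr rfl fun a _ => ?_
        rw [mul_assoc]
        simp only [Finset.sum_mul]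
    _ = 2 * ∑ c, ∑ v, ∑ a, (Nt g ginv P x c a v * up2 ginv P x c v) * mixUp ginv P x a u :=
        congrArg _ (sum_rot _)
    _ = 0 := by
        simp only [S.NPuPm, Finset.sum_const_zero, mul_zero]

/-- `W_a Π^a_u = 0`. -/
theorem WQm (S : Setup g ginv P Q) (k : ℝ) (htr : ∀ y, (∑ a, mixUp ginv P y a a) = k)
    (x : Pt n) (u : Fin n) :
    (∑ a, Wform g ginv P Q x a * mixUp ginv Q x a u) = 0 := by
  simp only [S.W_eq k htr]
  calc (∑ a, (-2 * ∑ c, ∑ v, Nt g ginv P x c a v * up2 ginv Q x c v) * mixUp ginv Q x a u)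
      = -2 * ∑ a, ∑ c, ∑ v, (Nt g ginv P x c a v * up2 ginv Q x c v) * mixUp ginv Q x a u := by
        rw [Finset.mul_sum]
        refine Finset.sum_congr rfl fun a _ => ?_
        rw [mul_assoc]
        simp only [Finset.sum_mul]
    _ = -2 * ∑ c, ∑ v, ∑ a, (Nt g ginv P x c a v * up2 ginv Q x c v) * mixUp ginv Q x a u :=
        congrArg _ (sum_rot _)
    _ = 0 := by
        simp only [S.NQuQm, Finset.sum_const_zero, mul_zero]

/-- `E_a Π^a_u = E_u`. -/
theorem EQm (S : Setup g ginv P Q) (x : Pt n) (u : Fin n) :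
    (∑ a, Eform g ginv P x a * mixUp ginv Q x a u) = Eform g ginv P x u := by
  have h := S.EPm x u
  calc (∑ a, Eform g ginv P x a * mixUp ginv Q x a u)
      = (∑ a, Eform g ginv P x a * (if a = u then (1:ℝ) else 0))
        - ∑ a, Eform g ginv P x a * mixUp ginv P x a u := by
        rw [← Finset.sum_sub_distrib]
        refine Finset.sum_congr rfl fun a _ => ?_
        rw [S.Qm_eq x a u]
        ring
    _ = Eform g ginv P x u := by rw [sum_delta_r' _ u, h]; ring

/-- `W_a P^a_u = W_u`. -/
theorem WPm (S : Setup g ginv P Q) (k : ℝ) (htr : ∀ y, (∑ a, mixUp ginv P y a a) = k)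
    (x : Pt n) (u : Fin n) :
    (∑ a, Wform g ginv P Q x a * mixUp ginv P x a u) = Wform g ginv P Q x u := by
  have h := S.WQm k htr x u
  calc (∑ a, Wform g ginv P Q x a * mixUp ginv P x a u)
      = (∑ a, Wform g ginv P Q x a * (if a = u then (1:ℝ) else 0))
        - ∑ a, Wform g ginv P Q x a * mixUp ginv Q x a u := by
        rw [← Finset.sum_sub_distrib]
        refine Finset.sum_congr rfl fun a _ => ?_
        rw [show mixUp ginv P x a u = (if a = u then (1:ℝ) else 0) - mixUp ginv Q x a u from by
          have := S.PmQm_del x a u; linarith]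
        ring
    _ = Wform g ginv P Q x u := by rw [sum_delta_r' _ u, h]; ring

/-- `E_d P^{db} = 0`. -/
theorem EPu (S : Setup g ginv P Q) (x : Pt n) (b : Fin n) :
    (∑ d, Eform g ginv P x d * up2 ginv P x d b) = 0 := by
  calc (∑ d, Eform g ginv P x d * up2 ginv P x d b)
      = ∑ d, ∑ u, Eform g ginv P x d * (mixUp ginv P x d u * ginv x u b) := by
        refine Finset.sum_congr rfl fun d _ => ?_
        rw [S.Pu_eq x d b, Finset.mul_sum]
    _ = ∑ u, (∑ d, Eform g ginv P x d * mixUp ginv P x d u) * ginv x u b := by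
        rw [Finset.sum_comm]
        refine Finset.sum_congr rfl fun u _ => ?_
        rw [Finset.sum_mul]
        exact Finset.sum_congr rfl fun d _ => by ring
    _ = 0 := by simp only [S.EPm, zero_mul, Finset.sum_const_zero]

/-- `W_d Π^{db} = 0`. -/
theorem WQu (S : Setup g ginv P Q) (k : ℝ) (htr : ∀ y, (∑ a, mixUp ginv P y a a) = k)
    (x : Pt n) (b : Fin n) :
    (∑ d, Wform g ginv P Q x d * up2 ginv Q x d b) = 0 := by
  calc (∑ d, Wform g ginv P Q x d * up2 ginv Q x d b)
      = ∑ d, ∑ u, Wform g ginv P Q x d * (mixUp ginv Q x d u * ginv x u b) := by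
        refine Finset.sum_congr rfl fun d _ => ?_
        rw [S.Qu_eq x d b, Finset.mul_sum]
    _ = ∑ u, (∑ d, Wform g ginv P Q x d * mixUp ginv Q x d u) * ginv x u b := by
        rw [Finset.sum_comm]
        refine Finset.sum_congr rfl fun u _ => ?_
        rw [Finset.sum_mul]
        exact Finset.sum_congr rfl fun d _ => by ring
    _ = 0 := by simp only [S.WQm k htr, zero_mul, Finset.sum_const_zero]

/-- `∑_a ∇_a P^a_d = (E_d - W_d)/2`. -/
theorem sumNM (S : Setup g ginv P Q) (k : ℝ) (htr : ∀ y, (∑ a, mixUp ginv P y a a) = k)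
    (x : Pt n) (d : Fin n) :
    (∑ a, NM g ginv P x a a d) = (Eform g ginv P x d - Wform g ginv P Q x d)/2 := by
  have hE := S.E_eq x d
  have hW := S.W_eq k htr x d
  have key : Eform g ginv P x d - Wform g ginv P Q x d
      = 2 * ∑ c, ∑ b, Nt g ginv P x c d b * ginv x c b := by
    rw [hE, hW]
    rw [show (2 * ∑ c, ∑ b, Nt g ginv P x c d b * ginv x c b)
        = (2 * ∑ c, ∑ b, Nt g ginv P x c d b * up2 ginv P x c b)
          + 2 * ∑ c, ∑ b, Nt g ginv P x c d b * up2 ginv Q x c b from by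
      rw [← mul_add, ← Finset.sum_add_distrib]
      refine congrArg _ (Finset.sum_congr rfl fun c _ => ?_)
      rw [← Finset.sum_add_distrib]
      refine Finset.sum_congr rfl fun b _ => ?_
      rw [S.Qu_sub x c b]
      ring]
    ring
  have lhs_eq : (∑ a, NM g ginv P x a a d) = ∑ a, ∑ r, ginv x a r * Nt g ginv P x a r d := rfl
  rw [lhs_eq, key]
  rw [show (∑ a, ∑ r, ginv x a r * Nt g ginv P x a r d)
      = ∑ a, ∑ r, Nt g ginv P x a d r * ginv x a r from
    Finset.sum_congr rfl fun a _ => Finset.sum_congr rfl fun r _ => by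
      rw [S.Nsym x a r d]; ring]
  ring

/-- `P^{as} M_{sar} = 0`. -/
theorem PuM (S : Setup g ginv P Q) (x : Pt n) (r : Fin n) :
    (∑ a, ∑ s, up2 ginv P x a s * Mtens g ginv P x s a r) = 0 := by
  have expand : (∑ a, ∑ s, up2 ginv P x a s * Mtens g ginv P x s a r)
      = (∑ a, ∑ s, up2 ginv P x a s * Nt g ginv P x a s r)
        + (∑ a, ∑ s, up2 ginv P x a s * Nt g ginv P x r s a)
        - ∑ a, ∑ s, up2 ginv P x a s * Nt g ginv P x s a r := by
    simp only [← Finset.sum_add_distrib, ← Finset.sum_sub_distrib]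
    refine Finset.sum_congr rfl fun a _ => Finset.sum_congr rfl fun s _ => ?_
    rw [Mtens_eq]
    ring
  have h13 : (∑ a, ∑ s, up2 ginv P x a s * Nt g ginv P x a s r)
      = ∑ a, ∑ s, up2 ginv P x a s * Nt g ginv P x s a r := by
    exact sum2_swap (fun a s => up2 ginv P x a s * Nt g ginv P x a s r)
      (fun a s => up2 ginv P x a s * Nt g ginv P x s a r)
      (fun a s => by
        show up2 ginv P x a s * Nt g ginv P x a s r = up2 ginv P x s a * Nt g ginv P x a s r
        rw [S.Pusym x a s])
  have h2 : (∑ a, ∑ s, up2 ginv P x a s * Nt g ginv P x r s a) = 0 := by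
    rw [← S.trPuN x r]
    exact Finset.sum_congr rfl fun a _ => Finset.sum_congr rfl fun s _ => by
      rw [S.Nsym x r s a]
  rw [expand, h13, h2]
  ring

/-- `Π^{as} M_{sar} = 0`. -/
theorem QuM (S : Setup g ginv P Q) (k : ℝ) (htr : ∀ y, (∑ a, mixUp ginv P y a a) = k)
    (x : Pt n) (r : Fin n) :
    (∑ a, ∑ s, up2 ginv Q x a s * Mtens g ginv P x s a r) = 0 := by
  have expand : (∑ a, ∑ s, up2 ginv Q x a s * Mtens g ginv P x s a r)
      = (∑ a, ∑ s, up2 ginv Q x a s * Nt g ginv P x a s r)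
        + (∑ a, ∑ s, up2 ginv Q x a s * Nt g ginv P x r s a)
        - ∑ a, ∑ s, up2 ginv Q x a s * Nt g ginv P x s a r := by
    simp only [← Finset.sum_add_distrib, ← Finset.sum_sub_distrib]
    refine Finset.sum_congr rfl fun a _ => Finset.sum_congr rfl fun s _ => ?_
    rw [Mtens_eq]
    ring
  have h13 : (∑ a, ∑ s, up2 ginv Q x a s * Nt g ginv P x a s r)
      = ∑ a, ∑ s, up2 ginv Q x a s * Nt g ginv P x s a r := by
    exact sum2_swap (fun a s => up2 ginv Q x a s * Nt g ginv P x a s r)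
      (fun a s => up2 ginv Q x a s * Nt g ginv P x s a r)
      (fun a s => by
        show up2 ginv Q x a s * Nt g ginv P x a s r = up2 ginv Q x s a * Nt g ginv P x a s r
        rw [S.Qusym x a s])
  have h2 : (∑ a, ∑ s, up2 ginv Q x a s * Nt g ginv P x r s a) = 0 := by
    rw [← S.trQuN k htr x r]
    exact Finset.sum_congr rfl fun a _ => Finset.sum_congr rfl fun s _ => by
      rw [S.Nsym x r s a]
  rw [expand, h13, h2]
  ring

/-- Trace of `Π^a_a`. -/
theorem trQm (S : Setup g ginv P Q) (k : ℝ) (htr : ∀ y, (∑ a, mixUp ginv P y a a) = k)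
    (x : Pt n) : (∑ a, mixUp ginv Q x a a) = (n : ℝ) - k := by
  have h : (∑ a, mixUp ginv Q x a a)
      = (∑ a : Fin n, (if a = a then (1:ℝ) else 0)) - ∑ a, mixUp ginv P x a a := by
    rw [← Finset.sum_sub_distrib]
    refine Finset.sum_congr rfl fun a _ => ?_
    rw [S.Qm_eq x a a]
  rw [h, htr x]
  simp

end Setup
namespace Setup
variable {n : ℕ} {g ginv P Q : Ten2 n}

/-- `Pm·Pu = Pu`. -/
theorem PmPu (S : Setup g ginv P Q) (x : Pt n) (a s : Fin n) :
    (∑ r, mixUp ginv P x a r * up2 ginv P x r s) = up2 ginv P x a s := by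
  calc (∑ r, mixUp ginv P x a r * up2 ginv P x r s)
      = ∑ r, ∑ w, mixUp ginv P x a r * (mixUp ginv P x r w * ginv x w s) := by
        refine Finset.sum_congr rfl fun r _ => ?_
        rw [S.Pu_eq x r s, Finset.mul_sum]
    _ = ∑ w, (∑ r, mixUp ginv P x a r * mixUp ginv P x r w) * ginv x w s := by
        rw [Finset.sum_comm]
        refine Finset.sum_congr rfl fun w _ => ?_
        rw [Finset.sum_mul]
        exact Finset.sum_congr rfl fun r _ => by ring
    _ = ∑ w, mixUp ginv P x a w * ginv x w s := by simp only [S.PmPm]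
    _ = up2 ginv P x a s := (S.Pu_eq x a s).symm

theorem PmQu (S : Setup g ginv P Q) (x : Pt n) (a s : Fin n) :
    (∑ r, mixUp ginv P x a r * up2 ginv Q x r s) = 0 := by
  calc (∑ r, mixUp ginv P x a r * up2 ginv Q x r s)
      = ∑ r, ∑ w, mixUp ginv P x a r * (mixUp ginv Q x r w * ginv x w s) := by
        refine Finset.sum_congr rfl fun r _ => ?_
        rw [S.Qu_eq x r s, Finset.mul_sum]
    _ = ∑ w, (∑ r, mixUp ginv P x a r * mixUp ginv Q x r w) * ginv x w s := by
        rw [Finset.sum_comm]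
        refine Finset.sum_congr rfl fun w _ => ?_
        rw [Finset.sum_mul]
        exact Finset.sum_congr rfl fun r _ => by ring
    _ = 0 := by simp only [S.PmQm, zero_mul, Finset.sum_const_zero]

theorem QmPu (S : Setup g ginv P Q) (x : Pt n) (a s : Fin n) :
    (∑ r, mixUp ginv Q x a r * up2 ginv P x r s) = 0 := by
  calc (∑ r, mixUp ginv Q x a r * up2 ginv P x r s)
      = ∑ r, ∑ w, mixUp ginv Q x a r * (mixUp ginv P x r w * ginv x w s) := by
        refine Finset.sum_congr rfl fun r _ => ?_
        rw [S.Pu_eq x r s, Finset.mul_sum]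
    _ = ∑ w, (∑ r, mixUp ginv Q x a r * mixUp ginv P x r w) * ginv x w s := by
        rw [Finset.sum_comm]
        refine Finset.sum_congr rfl fun w _ => ?_
        rw [Finset.sum_mul]
        exact Finset.sum_congr rfl fun r _ => by ring
    _ = 0 := by simp only [S.QmPm, zero_mul, Finset.sum_const_zero]

theorem QmQu (S : Setup g ginv P Q) (x : Pt n) (a s : Fin n) :
    (∑ r, mixUp ginv Q x a r * up2 ginv Q x r s) = up2 ginv Q x a s := by
  calc (∑ r, mixUp ginv Q x a r * up2 ginv Q x r s)
      = ∑ r, ∑ w, mixUp ginv Q x a r * (mixUp ginv Q x r w * ginv x w s) := by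
        refine Finset.sum_congr rfl fun r _ => ?_
        rw [S.Qu_eq x r s, Finset.mul_sum]
    _ = ∑ w, (∑ r, mixUp ginv Q x a r * mixUp ginv Q x r w) * ginv x w s := by
        rw [Finset.sum_comm]
        refine Finset.sum_congr rfl fun w _ => ?_
        rw [Finset.sum_mul]
        exact Finset.sum_congr rfl fun r _ => by ring
    _ = ∑ w, mixUp ginv Q x a w * ginv x w s := by simp only [S.QmQm]
    _ = up2 ginv Q x a s := (S.Qu_eq x a s).symm

/-- Rewriting the third group of `L`. -/
theorem XgiM (S : Setup g ginv P Q) (x : Pt n) (a b c : Fin n) :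
    (∑ u, (mixUp ginv P x a u - mixUp ginv Q x a u)
        * (∑ s, ginv x u s * Mtens g ginv P x s b c))
      = ∑ s, (up2 ginv P x a s - up2 ginv Q x a s) * Mtens g ginv P x s b c := by
  calc (∑ u, (mixUp ginv P x a u - mixUp ginv Q x a u)
        * (∑ s, ginv x u s * Mtens g ginv P x s b c))
      = ∑ u, ∑ s, (mixUp ginv P x a u - mixUp ginv Q x a u)
          * (ginv x u s * Mtens g ginv P x s b c) := by
        exact Finset.sum_congr rfl fun u _ => Finset.mul_sum _ _ _
    _ = ∑ s, (∑ u, (mixUp ginv P x a u - mixUp ginv Q x a u) * ginv x u s)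
          * Mtens g ginv P x s b c := by
        rw [Finset.sum_comm]
        refine Finset.sum_congr rfl fun s _ => ?_
        rw [Finset.sum_mul]
        exact Finset.sum_congr rfl fun u _ => by ring
    _ = _ := by
        refine Finset.sum_congr rfl fun s _ => ?_
        rw [show (∑ u, (mixUp ginv P x a u - mixUp ginv Q x a u) * ginv x u s)
            = (∑ u, mixUp ginv P x a u * ginv x u s) - ∑ u, mixUp ginv Q x a u * ginv x u s from by
          rw [← Finset.sum_sub_distrib]
          exact Finset.sum_congr rfl fun u _ => by ring]
        rw [← S.Pu_eq x a s, ← S.Qu_eq x a s]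

theorem MPu_eq (x : Pt n) (s : Fin n) :
    (∑ a, ∑ r, Mtens g ginv P x s a r * up2 ginv P x a r) = Eform g ginv P x s := rfl

theorem MQu_eq (x : Pt n) (s : Fin n) :
    (∑ a, ∑ r, Mtens g ginv P x s a r * up2 ginv Q x a r) = - Wform g ginv P Q x s := by
  rw [Wform, neg_neg]

/-- Trace of `L`: `L^a_{ar} = (E_r + W_r)/2`. -/
theorem Ltr (S : Setup g ginv P Q) (k : ℝ) (htr : ∀ y, (∑ a, mixUp ginv P y a a) = k)
    (hk : k ≠ 0) (hk2 : (n:ℝ) - k ≠ 0) (x : Pt n) (r : Fin n) :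
    (∑ a, Ltens k g ginv P Q x a a r)
      = (Eform g ginv P x r + Wform g ginv P Q x r)/2 := by
  have hterm : ∀ a, Ltens k g ginv P Q x a a r
      = (1/(2*k)) * (Eform g ginv P x a * mixUp ginv P x a r)
        + (1/(2*k)) * (Eform g ginv P x r * mixUp ginv P x a a)
        + (1/(2*((n:ℝ)-k))) * (Wform g ginv P Q x a * mixUp ginv Q x a r)
        + (1/(2*((n:ℝ)-k))) * (Wform g ginv P Q x r * mixUp ginv Q x a a)
        + (1/2) * ∑ s, (up2 ginv P x a s - up2 ginv Q x a s) * Mtens g ginv P x s a r := by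
    intro a
    simp only [Ltens]
    rw [← S.XgiM x a a r]
    ring
  simp only [hterm, Finset.sum_add_distrib]
  simp only [← Finset.mul_sum]
  rw [S.EPm x r, S.WQm k htr x r, htr x, S.trQm k htr x]
  have h3 : (∑ a, ∑ s, (up2 ginv P x a s - up2 ginv Q x a s) * Mtens g ginv P x s a r) = 0 := by
    calc (∑ a, ∑ s, (up2 ginv P x a s - up2 ginv Q x a s) * Mtens g ginv P x s a r)
        = (∑ a, ∑ s, up2 ginv P x a s * Mtens g ginv P x s a r)
          - ∑ a, ∑ s, up2 ginv Q x a s * Mtens g ginv P x s a r := by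
          rw [← Finset.sum_sub_distrib]
          refine Finset.sum_congr rfl fun a _ => ?_
          rw [← Finset.sum_sub_distrib]
          exact Finset.sum_congr rfl fun s _ => by ring
      _ = 0 := by rw [S.PuM x r, S.QuM k htr x r]; ring
  rw [h3]
  field_simp
  ring

end Setup
namespace Setup
variable {n : ℕ} {g ginv P Q : Ten2 n}

/-- `L^b_{ar} P^{ar} = -(1/2) Π^{bs} E_s`. -/
theorem LPu (S : Setup g ginv P Q) (k : ℝ) (htr : ∀ y, (∑ a, mixUp ginv P y a a) = k)
    (x : Pt n) (b : Fin n) :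
    (∑ a, ∑ r, Ltens k g ginv P Q x b a r * up2 ginv P x a r)
      = -(1/2) * ∑ s, up2 ginv Q x b s * Eform g ginv P x s := by
  have expand : (∑ a, ∑ r, Ltens k g ginv P Q x b a r * up2 ginv P x a r)
      = (1/(2*k)) * (∑ a, ∑ r, Eform g ginv P x a * (up2 ginv P x a r * mixUp ginv P x b r))
        + (1/(2*k)) * (∑ a, ∑ r, Eform g ginv P x r * (up2 ginv P x a r * mixUp ginv P x b a))
        + (1/(2*((n:ℝ)-k))) * (∑ a, ∑ r, Wform g ginv P Q x a
            * (up2 ginv P x a r * mixUp ginv Q x b r))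
        + (1/(2*((n:ℝ)-k))) * (∑ a, ∑ r, Wform g ginv P Q x r
            * (up2 ginv P x a r * mixUp ginv Q x b a))
        + (1/2) * (∑ a, ∑ r, (∑ s, (up2 ginv P x b s - up2 ginv Q x b s)
            * Mtens g ginv P x s a r) * up2 ginv P x a r) := by
    simp only [Finset.mul_sum, ← Finset.sum_add_distrib]
    refine Finset.sum_congr rfl fun a _ => Finset.sum_congr rfl fun r _ => ?_
    simp only [Ltens]
    rw [S.XgiM x b a r]
    ring
  have G1 : (∑ a, ∑ r, Eform g ginv P x a * (up2 ginv P x a r * mixUp ginv P x b r)) = 0 := by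
    calc (∑ a, ∑ r, Eform g ginv P x a * (up2 ginv P x a r * mixUp ginv P x b r))
        = ∑ a, Eform g ginv P x a * up2 ginv P x a b := by
          refine Finset.sum_congr rfl fun a _ => ?_
          rw [← S.PuPmT x a b, Finset.mul_sum]
      _ = 0 := S.EPu x b
  have G2 : (∑ a, ∑ r, Eform g ginv P x r * (up2 ginv P x a r * mixUp ginv P x b a)) = 0 := by
    calc (∑ a, ∑ r, Eform g ginv P x r * (up2 ginv P x a r * mixUp ginv P x b a))
        = ∑ r, ∑ a, Eform g ginv P x r * (up2 ginv P x r a * mixUp ginv P x b a) := by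
          rw [Finset.sum_comm]
          refine Finset.sum_congr rfl fun r _ => Finset.sum_congr rfl fun a _ => ?_
          rw [S.Pusym x a r]
      _ = ∑ r, Eform g ginv P x r * up2 ginv P x r b := by
          refine Finset.sum_congr rfl fun r _ => ?_
          rw [← S.PuPmT x r b, Finset.mul_sum]
      _ = 0 := S.EPu x b
  have G3 : (∑ a, ∑ r, Wform g ginv P Q x a * (up2 ginv P x a r * mixUp ginv Q x b r)) = 0 := by
    calc (∑ a, ∑ r, Wform g ginv P Q x a * (up2 ginv P x a r * mixUp ginv Q x b r))
        = ∑ a, Wform g ginv P Q x a * (0:ℝ) := by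
          refine Finset.sum_congr rfl fun a _ => ?_
          rw [← S.PuQmT x a b, Finset.mul_sum]
      _ = 0 := by simp
  have G4 : (∑ a, ∑ r, Wform g ginv P Q x r * (up2 ginv P x a r * mixUp ginv Q x b a)) = 0 := by
    calc (∑ a, ∑ r, Wform g ginv P Q x r * (up2 ginv P x a r * mixUp ginv Q x b a))
        = ∑ r, ∑ a, Wform g ginv P Q x r * (up2 ginv P x r a * mixUp ginv Q x b a) := by
          rw [Finset.sum_comm]
          refine Finset.sum_congr rfl fun r _ => Finset.sum_congr rfl fun a _ => ?_
          rw [S.Pusym x a r]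
      _ = ∑ r, Wform g ginv P Q x r * (0:ℝ) := by
          refine Finset.sum_congr rfl fun r _ => ?_
          rw [← S.PuQmT x r b, Finset.mul_sum]
      _ = 0 := by simp
  have G5 : (∑ a, ∑ r, (∑ s, (up2 ginv P x b s - up2 ginv Q x b s)
        * Mtens g ginv P x s a r) * up2 ginv P x a r)
      = - ∑ s, up2 ginv Q x b s * Eform g ginv P x s := by
    calc (∑ a, ∑ r, (∑ s, (up2 ginv P x b s - up2 ginv Q x b s)
          * Mtens g ginv P x s a r) * up2 ginv P x a r)
        = ∑ a, ∑ s, (up2 ginv P x b s - up2 ginv Q x b s)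
            * (∑ r, Mtens g ginv P x s a r * up2 ginv P x a r) := by
          refine Finset.sum_congr rfl fun a _ => ?_
          rw [sum_factor (fun s r => (up2 ginv P x b s - up2 ginv Q x b s)
            * Mtens g ginv P x s a r) (fun r => up2 ginv P x a r)]
          refine Finset.sum_congr rfl fun s _ => ?_
          rw [Finset.mul_sum]
          exact Finset.sum_congr rfl fun r _ => by ring
      _ = ∑ s, (up2 ginv P x b s - up2 ginv Q x b s)
            * (∑ a, ∑ r, Mtens g ginv P x s a r * up2 ginv P x a r) := by
          rw [Finset.sum_comm]
          refine Finset.sum_congr rfl fun s _ => ?_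
          rw [Finset.mul_sum]
      _ = ∑ s, (up2 ginv P x b s - up2 ginv Q x b s) * Eform g ginv P x s := by
          refine Finset.sum_congr rfl fun s _ => ?_
          rw [MPu_eq]
      _ = (∑ s, Eform g ginv P x s * up2 ginv P x s b)
            - ∑ s, up2 ginv Q x b s * Eform g ginv P x s := by
          rw [← Finset.sum_sub_distrib]
          refine Finset.sum_congr rfl fun s _ => ?_
          rw [S.Pusym x b s]
          ring
      _ = - ∑ s, up2 ginv Q x b s * Eform g ginv P x s := by
          rw [S.EPu x b]; ring
  rw [expand, G1, G2, G3, G4, G5]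
  ring

/-- `L^b_{ar} Π^{ar} = -(1/2) P^{bs} W_s`. -/
theorem LQu (S : Setup g ginv P Q) (k : ℝ) (htr : ∀ y, (∑ a, mixUp ginv P y a a) = k)
    (x : Pt n) (b : Fin n) :
    (∑ a, ∑ r, Ltens k g ginv P Q x b a r * up2 ginv Q x a r)
      = -(1/2) * ∑ s, up2 ginv P x b s * Wform g ginv P Q x s := by
  have expand : (∑ a, ∑ r, Ltens k g ginv P Q x b a r * up2 ginv Q x a r)
      = (1/(2*k)) * (∑ a, ∑ r, Eform g ginv P x a * (up2 ginv Q x a r * mixUp ginv P x b r))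
        + (1/(2*k)) * (∑ a, ∑ r, Eform g ginv P x r * (up2 ginv Q x a r * mixUp ginv P x b a))
        + (1/(2*((n:ℝ)-k))) * (∑ a, ∑ r, Wform g ginv P Q x a
            * (up2 ginv Q x a r * mixUp ginv Q x b r))
        + (1/(2*((n:ℝ)-k))) * (∑ a, ∑ r, Wform g ginv P Q x r
            * (up2 ginv Q x a r * mixUp ginv Q x b a))
        + (1/2) * (∑ a, ∑ r, (∑ s, (up2 ginv P x b s - up2 ginv Q x b s)
            * Mtens g ginv P x s a r) * up2 ginv Q x a r) := by
    simp only [Finset.mul_sum, ← Finset.sum_add_distrib]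
    refine Finset.sum_congr rfl fun a _ => Finset.sum_congr rfl fun r _ => ?_
    simp only [Ltens]
    rw [S.XgiM x b a r]
    ring
  have G1 : (∑ a, ∑ r, Eform g ginv P x a * (up2 ginv Q x a r * mixUp ginv P x b r)) = 0 := by
    calc (∑ a, ∑ r, Eform g ginv P x a * (up2 ginv Q x a r * mixUp ginv P x b r))
        = ∑ a, Eform g ginv P x a * (0:ℝ) := by
          refine Finset.sum_congr rfl fun a _ => ?_
          rw [← S.QuPmT x a b, Finset.mul_sum]
      _ = 0 := by simp
  have G2 : (∑ a, ∑ r, Eform g ginv P x r * (up2 ginv Q x a r * mixUp ginv P x b a)) = 0 := by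
    calc (∑ a, ∑ r, Eform g ginv P x r * (up2 ginv Q x a r * mixUp ginv P x b a))
        = ∑ r, ∑ a, Eform g ginv P x r * (up2 ginv Q x r a * mixUp ginv P x b a) := by
          rw [Finset.sum_comm]
          refine Finset.sum_congr rfl fun r _ => Finset.sum_congr rfl fun a _ => ?_
          rw [S.Qusym x a r]
      _ = ∑ r, Eform g ginv P x r * (0:ℝ) := by
          refine Finset.sum_congr rfl fun r _ => ?_
          rw [← S.QuPmT x r b, Finset.mul_sum]
      _ = 0 := by simp
  have G3 : (∑ a, ∑ r, Wform g ginv P Q x a * (up2 ginv Q x a r * mixUp ginv Q x b r)) = 0 := by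
    calc (∑ a, ∑ r, Wform g ginv P Q x a * (up2 ginv Q x a r * mixUp ginv Q x b r))
        = ∑ a, Wform g ginv P Q x a * up2 ginv Q x a b := by
          refine Finset.sum_congr rfl fun a _ => ?_
          rw [← S.QuQmT x a b, Finset.mul_sum]
      _ = 0 := S.WQu k htr x b
  have G4 : (∑ a, ∑ r, Wform g ginv P Q x r * (up2 ginv Q x a r * mixUp ginv Q x b a)) = 0 := by
    calc (∑ a, ∑ r, Wform g ginv P Q x r * (up2 ginv Q x a r * mixUp ginv Q x b a))
        = ∑ r, ∑ a, Wform g ginv P Q x r * (up2 ginv Q x r a * mixUp ginv Q x b a) := by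
          rw [Finset.sum_comm]
          refine Finset.sum_congr rfl fun r _ => Finset.sum_congr rfl fun a _ => ?_
          rw [S.Qusym x a r]
      _ = ∑ r, Wform g ginv P Q x r * up2 ginv Q x r b := by
          refine Finset.sum_congr rfl fun r _ => ?_
          rw [← S.QuQmT x r b, Finset.mul_sum]
      _ = 0 := S.WQu k htr x b
  have G5 : (∑ a, ∑ r, (∑ s, (up2 ginv P x b s - up2 ginv Q x b s)
        * Mtens g ginv P x s a r) * up2 ginv Q x a r)
      = - ∑ s, up2 ginv P x b s * Wform g ginv P Q x s := by
    calc (∑ a, ∑ r, (∑ s, (up2 ginv P x b s - up2 ginv Q x b s)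
          * Mtens g ginv P x s a r) * up2 ginv Q x a r)
        = ∑ a, ∑ s, (up2 ginv P x b s - up2 ginv Q x b s)
            * (∑ r, Mtens g ginv P x s a r * up2 ginv Q x a r) := by
          refine Finset.sum_congr rfl fun a _ => ?_
          rw [sum_factor (fun s r => (up2 ginv P x b s - up2 ginv Q x b s)
            * Mtens g ginv P x s a r) (fun r => up2 ginv Q x a r)]
          refine Finset.sum_congr rfl fun s _ => ?_
          rw [Finset.mul_sum]
          exact Finset.sum_congr rfl fun r _ => by ring
      _ = ∑ s, (up2 ginv P x b s - up2 ginv Q x b s)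
            * (∑ a, ∑ r, Mtens g ginv P x s a r * up2 ginv Q x a r) := by
          rw [Finset.sum_comm]
          refine Finset.sum_congr rfl fun s _ => ?_
          rw [Finset.mul_sum]
      _ = ∑ s, (up2 ginv P x b s - up2 ginv Q x b s) * (- Wform g ginv P Q x s) := by
          refine Finset.sum_congr rfl fun s _ => ?_
          rw [MQu_eq]
      _ = (∑ s, Wform g ginv P Q x s * up2 ginv Q x s b)
            - ∑ s, up2 ginv P x b s * Wform g ginv P Q x s := by
          rw [← Finset.sum_sub_distrib]
          refine Finset.sum_congr rfl fun s _ => ?_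
          rw [S.Qusym x b s]
          ring
      _ = - ∑ s, up2 ginv P x b s * Wform g ginv P Q x s := by
          rw [S.WQu k htr x b]; ring
  rw [expand, G1, G2, G3, G4, G5]
  ring

/-- `L^r_{ab} P^a_r = E_b/2`. -/
theorem LPm (S : Setup g ginv P Q) (k : ℝ) (htr : ∀ y, (∑ a, mixUp ginv P y a a) = k)
    (hk : k ≠ 0) (hk2 : (n:ℝ) - k ≠ 0) (x : Pt n) (b : Fin n) :
    (∑ a, ∑ r, Ltens k g ginv P Q x r a b * mixUp ginv P x a r)
      = Eform g ginv P x b / 2 := by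
  have expand : (∑ a, ∑ r, Ltens k g ginv P Q x r a b * mixUp ginv P x a r)
      = (1/(2*k)) * (∑ a, ∑ r, Eform g ginv P x a * (mixUp ginv P x a r * mixUp ginv P x r b))
        + (1/(2*k)) * (∑ a, ∑ r, Eform g ginv P x b * (mixUp ginv P x a r * mixUp ginv P x r a))
        + (1/(2*((n:ℝ)-k))) * (∑ a, ∑ r, Wform g ginv P Q x a
            * (mixUp ginv P x a r * mixUp ginv Q x r b))
        + (1/(2*((n:ℝ)-k))) * (∑ a, ∑ r, Wform g ginv P Q x b
            * (mixUp ginv P x a r * mixUp ginv Q x r a))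
        + (1/2) * (∑ a, ∑ r, (∑ s, (up2 ginv P x r s - up2 ginv Q x r s)
            * Mtens g ginv P x s a b) * mixUp ginv P x a r) := by
    simp only [Finset.mul_sum, ← Finset.sum_add_distrib]
    refine Finset.sum_congr rfl fun a _ => Finset.sum_congr rfl fun r _ => ?_
    simp only [Ltens]
    rw [S.XgiM x r a b]
    ring
  have G1 : (∑ a, ∑ r, Eform g ginv P x a * (mixUp ginv P x a r * mixUp ginv P x r b)) = 0 := by
    calc (∑ a, ∑ r, Eform g ginv P x a * (mixUp ginv P x a r * mixUp ginv P x r b))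
        = ∑ a, Eform g ginv P x a * mixUp ginv P x a b := by
          refine Finset.sum_congr rfl fun a _ => ?_
          rw [← S.PmPm x a b, Finset.mul_sum]
      _ = 0 := S.EPm x b
  have G2 : (∑ a, ∑ r, Eform g ginv P x b * (mixUp ginv P x a r * mixUp ginv P x r a))
      = Eform g ginv P x b * k := by
    calc (∑ a, ∑ r, Eform g ginv P x b * (mixUp ginv P x a r * mixUp ginv P x r a))
        = ∑ a, Eform g ginv P x b * mixUp ginv P x a a := by
          refine Finset.sum_congr rfl fun a _ => ?_
          rw [← S.PmPm x a a, Finset.mul_sum]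
      _ = Eform g ginv P x b * k := by rw [← Finset.mul_sum, htr x]
  have G3 : (∑ a, ∑ r, Wform g ginv P Q x a * (mixUp ginv P x a r * mixUp ginv Q x r b)) = 0 := by
    calc (∑ a, ∑ r, Wform g ginv P Q x a * (mixUp ginv P x a r * mixUp ginv Q x r b))
        = ∑ a, Wform g ginv P Q x a * (0:ℝ) := by
          refine Finset.sum_congr rfl fun a _ => ?_
          rw [← S.PmQm x a b, Finset.mul_sum]
      _ = 0 := by simp
  have G4 : (∑ a, ∑ r, Wform g ginv P Q x b * (mixUp ginv P x a r * mixUp ginv Q x r a)) = 0 := by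
    calc (∑ a, ∑ r, Wform g ginv P Q x b * (mixUp ginv P x a r * mixUp ginv Q x r a))
        = ∑ a, Wform g ginv P Q x b * (0:ℝ) := by
          refine Finset.sum_congr rfl fun a _ => ?_
          rw [← S.PmQm x a a, Finset.mul_sum]
      _ = 0 := by simp
  have G5 : (∑ a, ∑ r, (∑ s, (up2 ginv P x r s - up2 ginv Q x r s)
        * Mtens g ginv P x s a b) * mixUp ginv P x a r) = 0 := by
    calc (∑ a, ∑ r, (∑ s, (up2 ginv P x r s - up2 ginv Q x r s)
          * Mtens g ginv P x s a b) * mixUp ginv P x a r)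
        = ∑ a, ∑ s, (∑ r, mixUp ginv P x a r * (up2 ginv P x r s - up2 ginv Q x r s))
            * Mtens g ginv P x s a b := by
          refine Finset.sum_congr rfl fun a _ => ?_
          rw [show (∑ r, (∑ s, (up2 ginv P x r s - up2 ginv Q x r s)
              * Mtens g ginv P x s a b) * mixUp ginv P x a r)
              = ∑ s, ∑ r, ((up2 ginv P x r s - up2 ginv Q x r s)
              * Mtens g ginv P x s a b) * mixUp ginv P x a r from
            sum_factor (fun s r => (up2 ginv P x r s - up2 ginv Q x r s)
              * Mtens g ginv P x s a b) (fun r => mixUp ginv P x a r)]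
          refine Finset.sum_congr rfl fun s _ => ?_
          rw [Finset.sum_mul]
          exact Finset.sum_congr rfl fun r _ => by ring
      _ = ∑ a, ∑ s, up2 ginv P x a s * Mtens g ginv P x s a b := by
          refine Finset.sum_congr rfl fun a _ => Finset.sum_congr rfl fun s _ => ?_
          rw [show (∑ r, mixUp ginv P x a r * (up2 ginv P x r s - up2 ginv Q x r s))
              = (∑ r, mixUp ginv P x a r * up2 ginv P x r s)
                - ∑ r, mixUp ginv P x a r * up2 ginv Q x r s from by
            rw [← Finset.sum_sub_distrib]
            exact Finset.sum_congr rfl fun r _ => by ring]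
          rw [S.PmPu x a s, S.PmQu x a s]
          ring
      _ = 0 := S.PuM x b
  rw [expand, G1, G2, G3, G4, G5]
  field_simp
  ring

/-- `L^r_{ab} Π^a_r = W_b/2`. -/
theorem LQm (S : Setup g ginv P Q) (k : ℝ) (htr : ∀ y, (∑ a, mixUp ginv P y a a) = k)
    (hk : k ≠ 0) (hk2 : (n:ℝ) - k ≠ 0) (x : Pt n) (b : Fin n) :
    (∑ a, ∑ r, Ltens k g ginv P Q x r a b * mixUp ginv Q x a r)
      = Wform g ginv P Q x b / 2 := by
  have expand : (∑ a, ∑ r, Ltens k g ginv P Q x r a b * mixUp ginv Q x a r)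
      = (1/(2*k)) * (∑ a, ∑ r, Eform g ginv P x a * (mixUp ginv Q x a r * mixUp ginv P x r b))
        + (1/(2*k)) * (∑ a, ∑ r, Eform g ginv P x b * (mixUp ginv Q x a r * mixUp ginv P x r a))
        + (1/(2*((n:ℝ)-k))) * (∑ a, ∑ r, Wform g ginv P Q x a
            * (mixUp ginv Q x a r * mixUp ginv Q x r b))
        + (1/(2*((n:ℝ)-k))) * (∑ a, ∑ r, Wform g ginv P Q x b
            * (mixUp ginv Q x a r * mixUp ginv Q x r a))
        + (1/2) * (∑ a, ∑ r, (∑ s, (up2 ginv P x r s - up2 ginv Q x r s)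
            * Mtens g ginv P x s a b) * mixUp ginv Q x a r) := by
    simp only [Finset.mul_sum, ← Finset.sum_add_distrib]
    refine Finset.sum_congr rfl fun a _ => Finset.sum_congr rfl fun r _ => ?_
    simp only [Ltens]
    rw [S.XgiM x r a b]
    ring
  have G1 : (∑ a, ∑ r, Eform g ginv P x a * (mixUp ginv Q x a r * mixUp ginv P x r b)) = 0 := by
    calc (∑ a, ∑ r, Eform g ginv P x a * (mixUp ginv Q x a r * mixUp ginv P x r b))
        = ∑ a, Eform g ginv P x a * (0:ℝ) := by
          refine Finset.sum_congr rfl fun a _ => ?_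
          rw [← S.QmPm x a b, Finset.mul_sum]
      _ = 0 := by simp
  have G2 : (∑ a, ∑ r, Eform g ginv P x b * (mixUp ginv Q x a r * mixUp ginv P x r a)) = 0 := by
    calc (∑ a, ∑ r, Eform g ginv P x b * (mixUp ginv Q x a r * mixUp ginv P x r a))
        = ∑ a, Eform g ginv P x b * (0:ℝ) := by
          refine Finset.sum_congr rfl fun a _ => ?_
          rw [← S.QmPm x a a, Finset.mul_sum]
      _ = 0 := by simp
  have G3 : (∑ a, ∑ r, Wform g ginv P Q x a * (mixUp ginv Q x a r * mixUp ginv Q x r b)) = 0 := by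
    calc (∑ a, ∑ r, Wform g ginv P Q x a * (mixUp ginv Q x a r * mixUp ginv Q x r b))
        = ∑ a, Wform g ginv P Q x a * mixUp ginv Q x a b := by
          refine Finset.sum_congr rfl fun a _ => ?_
          rw [← S.QmQm x a b, Finset.mul_sum]
      _ = 0 := S.WQm k htr x b
  have G4 : (∑ a, ∑ r, Wform g ginv P Q x b * (mixUp ginv Q x a r * mixUp ginv Q x r a))
      = Wform g ginv P Q x b * ((n:ℝ) - k) := by
    calc (∑ a, ∑ r, Wform g ginv P Q x b * (mixUp ginv Q x a r * mixUp ginv Q x r a))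
        = ∑ a, Wform g ginv P Q x b * mixUp ginv Q x a a := by
          refine Finset.sum_congr rfl fun a _ => ?_
          rw [← S.QmQm x a a, Finset.mul_sum]
      _ = Wform g ginv P Q x b * ((n:ℝ) - k) := by rw [← Finset.mul_sum, S.trQm k htr x]
  have G5 : (∑ a, ∑ r, (∑ s, (up2 ginv P x r s - up2 ginv Q x r s)
        * Mtens g ginv P x s a b) * mixUp ginv Q x a r) = 0 := by
    calc (∑ a, ∑ r, (∑ s, (up2 ginv P x r s - up2 ginv Q x r s)
          * Mtens g ginv P x s a b) * mixUp ginv Q x a r)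
        = ∑ a, ∑ s, (∑ r, mixUp ginv Q x a r * (up2 ginv P x r s - up2 ginv Q x r s))
            * Mtens g ginv P x s a b := by
          refine Finset.sum_congr rfl fun a _ => ?_
          rw [show (∑ r, (∑ s, (up2 ginv P x r s - up2 ginv Q x r s)
              * Mtens g ginv P x s a b) * mixUp ginv Q x a r)
              = ∑ s, ∑ r, ((up2 ginv P x r s - up2 ginv Q x r s)
              * Mtens g ginv P x s a b) * mixUp ginv Q x a r from
            sum_factor (fun s r => (up2 ginv P x r s - up2 ginv Q x r s)
              * Mtens g ginv P x s a b) (fun r => mixUp ginv Q x a r)]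
          refine Finset.sum_congr rfl fun s _ => ?_
          rw [Finset.sum_mul]
          exact Finset.sum_congr rfl fun r _ => by ring
      _ = ∑ a, ∑ s, (- up2 ginv Q x a s) * Mtens g ginv P x s a b := by
          refine Finset.sum_congr rfl fun a _ => Finset.sum_congr rfl fun s _ => ?_
          rw [show (∑ r, mixUp ginv Q x a r * (up2 ginv P x r s - up2 ginv Q x r s))
              = (∑ r, mixUp ginv Q x a r * up2 ginv P x r s)
                - ∑ r, mixUp ginv Q x a r * up2 ginv Q x r s from by
            rw [← Finset.sum_sub_distrib]
            exact Finset.sum_congr rfl fun r _ => by ring]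
          rw [S.QmPu x a s, S.QmQu x a s]
          ring
      _ = - ∑ a, ∑ s, up2 ginv Q x a s * Mtens g ginv P x s a b := by
          simp only [neg_mul, Finset.sum_neg_distrib]
      _ = 0 := by rw [S.QuM k htr x b]; ring
  rw [expand, G1, G2, G3, G4, G5]
  field_simp
  ring

end Setup
namespace Setup
variable {n : ℕ} {g ginv P Q : Ten2 n}

theorem cov20_split (Γ1 L : Ten3 n) (T : Ten2 n) (x : Pt n) (e a b : Fin n) :
    cov20 (fun y p q r => Γ1 y p q r + L y p q r) T x e a b
      = cov20 Γ1 T x e a b + (∑ r, L x a e r * T x r b) + ∑ r, L x b e r * T x a r := by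
  simp only [cov20, add_mul, Finset.sum_add_distrib]
  ring

theorem cov11_split (Γ1 L : Ten3 n) (T : Ten2 n) (x : Pt n) (e a b : Fin n) :
    cov11 (fun y p q r => Γ1 y p q r + L y p q r) T x e a b
      = cov11 Γ1 T x e a b + (∑ r, L x a e r * T x r b) - ∑ r, L x r e b * T x a r := by
  simp only [cov11, add_mul, Finset.sum_add_distrib]
  ring

end Setup

theorem stmt_12' {n : ℕ} {g ginv P Q : Ten2 n} (S : Setup g ginv P Q)
    (k : ℝ) (htr : ∀ y, (∑ a, mixUp ginv P y a a) = k)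
    (hk : k ≠ 0) (hk2 : (n:ℝ) - k ≠ 0) :
    ∀ x b,
      (∑ a, cov20 (biconn k g ginv P Q) (up2 ginv P) x a a b) = 0
      ∧ (∑ a, cov20 (biconn k g ginv P Q) (up2 ginv Q) x a a b) = 0
      ∧ (∑ a, cov11 (biconn k g ginv P Q) (mixUp ginv P) x a a b) = 0
      ∧ (∑ a, cov11 (biconn k g ginv P Q) (mixUp ginv Q) x a a b) = 0 := by
  intro x b
  have hA1 : (∑ z, Eform g ginv P x z * up2 ginv P x z b) = 0 := S.EPu x b
  have hA4 : (∑ z, Wform g ginv P Q x z * up2 ginv Q x z b) = 0 := S.WQu k htr x b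
  -- splitting g⁻¹ into P + Π
  have hgiE : (∑ d, Eform g ginv P x d * ginv x d b)
      = (∑ d, Eform g ginv P x d * up2 ginv P x d b)
        + ∑ d, Eform g ginv P x d * up2 ginv Q x d b := by
    rw [← Finset.sum_add_distrib]
    refine Finset.sum_congr rfl fun d _ => ?_
    rw [show ginv x d b = up2 ginv P x d b + up2 ginv Q x d b from by
      have := S.Qu_sub x d b; linarith]
    ring
  have hgiW : (∑ d, Wform g ginv P Q x d * ginv x d b)
      = (∑ d, Wform g ginv P Q x d * up2 ginv P x d b)
        + ∑ d, Wform g ginv P Q x d * up2 ginv Q x d b := by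
    rw [← Finset.sum_add_distrib]
    refine Finset.sum_congr rfl fun d _ => ?_
    rw [show ginv x d b = up2 ginv P x d b + up2 ginv Q x d b from by
      have := S.Qu_sub x d b; linarith]
    ring
  -- first divergence
  have hT1 : (∑ a, cov20 (christoffel g ginv) (up2 ginv P) x a a b)
      = (1/2) * (∑ d, Eform g ginv P x d * ginv x d b)
        - (1/2) * (∑ d, Wform g ginv P Q x d * ginv x d b) := by
    calc (∑ a, cov20 (christoffel g ginv) (up2 ginv P) x a a b)
        = ∑ a, ∑ d, Setup.NM g ginv P x a a d * ginv x d b := by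
          exact Finset.sum_congr rfl fun a _ => S.cov20_Pu x a a b
      _ = ∑ d, (∑ a, Setup.NM g ginv P x a a d) * ginv x d b := by
          rw [Finset.sum_comm]
          exact Finset.sum_congr rfl fun d _ => (Finset.sum_mul _ _ _).symm
      _ = ∑ d, ((Eform g ginv P x d - Wform g ginv P Q x d)/2) * ginv x d b := by
          exact Finset.sum_congr rfl fun d _ => by rw [S.sumNM k htr x d]
      _ = _ := by
          rw [Finset.mul_sum, Finset.mul_sum, ← Finset.sum_sub_distrib]
          exact Finset.sum_congr rfl fun d _ => by ring
  have hT2P : (∑ a, ∑ r, Ltens k g ginv P Q x a a r * up2 ginv P x r b)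
      = (1/2) * (∑ r, Eform g ginv P x r * up2 ginv P x r b)
        + (1/2) * (∑ r, Wform g ginv P Q x r * up2 ginv P x r b) := by
    calc (∑ a, ∑ r, Ltens k g ginv P Q x a a r * up2 ginv P x r b)
        = ∑ r, (∑ a, Ltens k g ginv P Q x a a r) * up2 ginv P x r b := by
          rw [Finset.sum_comm]
          exact Finset.sum_congr rfl fun r _ => (Finset.sum_mul _ _ _).symm
      _ = ∑ r, ((Eform g ginv P x r + Wform g ginv P Q x r)/2) * up2 ginv P x r b := by
          exact Finset.sum_congr rfl fun r _ => by rw [S.Ltr k htr hk hk2 x r]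
      _ = _ := by
          rw [Finset.mul_sum, Finset.mul_sum, ← Finset.sum_add_distrib]
          exact Finset.sum_congr rfl fun r _ => by ring
  have hT2Q : (∑ a, ∑ r, Ltens k g ginv P Q x a a r * up2 ginv Q x r b)
      = (1/2) * (∑ r, Eform g ginv P x r * up2 ginv Q x r b)
        + (1/2) * (∑ r, Wform g ginv P Q x r * up2 ginv Q x r b) := by
    calc (∑ a, ∑ r, Ltens k g ginv P Q x a a r * up2 ginv Q x r b)
        = ∑ r, (∑ a, Ltens k g ginv P Q x a a r) * up2 ginv Q x r b := by
          rw [Finset.sum_comm]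
          exact Finset.sum_congr rfl fun r _ => (Finset.sum_mul _ _ _).symm
      _ = ∑ r, ((Eform g ginv P x r + Wform g ginv P Q x r)/2) * up2 ginv Q x r b := by
          exact Finset.sum_congr rfl fun r _ => by rw [S.Ltr k htr hk hk2 x r]
      _ = _ := by
          rw [Finset.mul_sum, Finset.mul_sum, ← Finset.sum_add_distrib]
          exact Finset.sum_congr rfl fun r _ => by ring
  have hT3P : (∑ a, ∑ r, Ltens k g ginv P Q x b a r * up2 ginv P x a r)
      = -(1/2) * ∑ s, Eform g ginv P x s * up2 ginv Q x s b := by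
    rw [S.LPu k htr x b]
    refine congrArg _ (Finset.sum_congr rfl fun s _ => ?_)
    rw [S.Qusym x b s]
    ring
  have hT3Q : (∑ a, ∑ r, Ltens k g ginv P Q x b a r * up2 ginv Q x a r)
      = -(1/2) * ∑ s, Wform g ginv P Q x s * up2 ginv P x s b := by
    rw [S.LQu k htr x b]
    refine congrArg _ (Finset.sum_congr rfl fun s _ => ?_)
    rw [S.Pusym x b s]
    ring
  refine ⟨?_, ?_, ?_, ?_⟩
  · -- ∇̄_a P^{ab} = 0
    have hsplit : (∑ a, cov20 (biconn k g ginv P Q) (up2 ginv P) x a a b)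
        = (∑ a, cov20 (christoffel g ginv) (up2 ginv P) x a a b)
          + (∑ a, ∑ r, Ltens k g ginv P Q x a a r * up2 ginv P x r b)
          + ∑ a, ∑ r, Ltens k g ginv P Q x b a r * up2 ginv P x a r := by
      simp only [← Finset.sum_add_distrib]
      exact Finset.sum_congr rfl fun a _ =>
        Setup.cov20_split (christoffel g ginv) (Ltens k g ginv P Q) (up2 ginv P) x a a b
    rw [hsplit, hT1, hT2P, hT3P, hgiE, hgiW]
    linarith [hA1, hA4]
  · -- ∇̄_a Π^{ab} = 0
    have hT1Q : (∑ a, cov20 (christoffel g ginv) (up2 ginv Q) x a a b)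
        = -((1/2) * (∑ d, Eform g ginv P x d * ginv x d b)
          - (1/2) * (∑ d, Wform g ginv P Q x d * ginv x d b)) := by
      calc (∑ a, cov20 (christoffel g ginv) (up2 ginv Q) x a a b)
          = ∑ a, -∑ d, Setup.NM g ginv P x a a d * ginv x d b := by
            exact Finset.sum_congr rfl fun a _ => S.cov20_Qu x a a b
        _ = -∑ a, ∑ d, Setup.NM g ginv P x a a d * ginv x d b := by
            rw [Finset.sum_neg_distrib]
        _ = _ := by
            rw [neg_inj.2 rfl]
            rw [show (∑ a, ∑ d, Setup.NM g ginv P x a a d * ginv x d b)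
                = (1/2) * (∑ d, Eform g ginv P x d * ginv x d b)
                  - (1/2) * (∑ d, Wform g ginv P Q x d * ginv x d b) from by
              calc (∑ a, ∑ d, Setup.NM g ginv P x a a d * ginv x d b)
                  = ∑ d, (∑ a, Setup.NM g ginv P x a a d) * ginv x d b := by
                    rw [Finset.sum_comm]
                    exact Finset.sum_congr rfl fun d _ => (Finset.sum_mul _ _ _).symm
                _ = ∑ d, ((Eform g ginv P x d - Wform g ginv P Q x d)/2) * ginv x d b := by
                    exact Finset.sum_congr rfl fun d _ => by rw [S.sumNM k htr x d]
                _ = _ := by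
                    rw [Finset.mul_sum, Finset.mul_sum, ← Finset.sum_sub_distrib]
                    exact Finset.sum_congr rfl fun d _ => by ring]
    have hsplit : (∑ a, cov20 (biconn k g ginv P Q) (up2 ginv Q) x a a b)
        = (∑ a, cov20 (christoffel g ginv) (up2 ginv Q) x a a b)
          + (∑ a, ∑ r, Ltens k g ginv P Q x a a r * up2 ginv Q x r b)
          + ∑ a, ∑ r, Ltens k g ginv P Q x b a r * up2 ginv Q x a r := by
      simp only [← Finset.sum_add_distrib]
      exact Finset.sum_congr rfl fun a _ =>
        Setup.cov20_split (christoffel g ginv) (Ltens k g ginv P Q) (up2 ginv Q) x a a b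
    rw [hsplit, hT1Q, hT2Q, hT3Q, hgiE, hgiW]
    linarith [hA1, hA4]
  · -- ∇̄_a P^a_b = 0
    have hsplit : (∑ a, cov11 (biconn k g ginv P Q) (mixUp ginv P) x a a b)
        = (∑ a, cov11 (christoffel g ginv) (mixUp ginv P) x a a b)
          + (∑ a, ∑ r, Ltens k g ginv P Q x a a r * mixUp ginv P x r b)
          - ∑ a, ∑ r, Ltens k g ginv P Q x r a b * mixUp ginv P x a r := by
      simp only [← Finset.sum_add_distrib, ← Finset.sum_sub_distrib]
      exact Finset.sum_congr rfl fun a _ =>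
        Setup.cov11_split (christoffel g ginv) (Ltens k g ginv P Q) (mixUp ginv P) x a a b
    have h1 : (∑ a, cov11 (christoffel g ginv) (mixUp ginv P) x a a b)
        = (Eform g ginv P x b - Wform g ginv P Q x b)/2 := by
      rw [show (∑ a, cov11 (christoffel g ginv) (mixUp ginv P) x a a b)
          = ∑ a, Setup.NM g ginv P x a a b from
        Finset.sum_congr rfl fun a _ => S.cov11_Pm x a a b]
      exact S.sumNM k htr x b
    have h2 : (∑ a, ∑ r, Ltens k g ginv P Q x a a r * mixUp ginv P x r b)
        = Wform g ginv P Q x b / 2 := by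
      calc (∑ a, ∑ r, Ltens k g ginv P Q x a a r * mixUp ginv P x r b)
          = ∑ r, (∑ a, Ltens k g ginv P Q x a a r) * mixUp ginv P x r b := by
            rw [Finset.sum_comm]
            exact Finset.sum_congr rfl fun r _ => (Finset.sum_mul _ _ _).symm
        _ = ∑ r, ((Eform g ginv P x r + Wform g ginv P Q x r)/2) * mixUp ginv P x r b := by
            exact Finset.sum_congr rfl fun r _ => by rw [S.Ltr k htr hk hk2 x r]
        _ = (1/2) * ((∑ r, Eform g ginv P x r * mixUp ginv P x r b)
            + ∑ r, Wform g ginv P Q x r * mixUp ginv P x r b) := by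
            rw [← Finset.sum_add_distrib, Finset.mul_sum]
            exact Finset.sum_congr rfl fun r _ => by ring
        _ = _ := by
            rw [S.EPm x b, S.WPm k htr x b]
            ring
    rw [hsplit, h1, h2, S.LPm k htr hk hk2 x b]
    ring
  · -- ∇̄_a Π^a_b = 0
    have hsplit : (∑ a, cov11 (biconn k g ginv P Q) (mixUp ginv Q) x a a b)
        = (∑ a, cov11 (christoffel g ginv) (mixUp ginv Q) x a a b)
          + (∑ a, ∑ r, Ltens k g ginv P Q x a a r * mixUp ginv Q x r b)
          - ∑ a, ∑ r, Ltens k g ginv P Q x r a b * mixUp ginv Q x a r := by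
      simp only [← Finset.sum_add_distrib, ← Finset.sum_sub_distrib]
      exact Finset.sum_congr rfl fun a _ =>
        Setup.cov11_split (christoffel g ginv) (Ltens k g ginv P Q) (mixUp ginv Q) x a a b
    have h1 : (∑ a, cov11 (christoffel g ginv) (mixUp ginv Q) x a a b)
        = -((Eform g ginv P x b - Wform g ginv P Q x b)/2) := by
      rw [show (∑ a, cov11 (christoffel g ginv) (mixUp ginv Q) x a a b)
          = ∑ a, -Setup.NM g ginv P x a a b from
        Finset.sum_congr rfl fun a _ => S.cov11_Qm x a a b]
      rw [Finset.sum_neg_distrib, S.sumNM k htr x b]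
    have h2 : (∑ a, ∑ r, Ltens k g ginv P Q x a a r * mixUp ginv Q x r b)
        = Eform g ginv P x b / 2 := by
      calc (∑ a, ∑ r, Ltens k g ginv P Q x a a r * mixUp ginv Q x r b)
          = ∑ r, (∑ a, Ltens k g ginv P Q x a a r) * mixUp ginv Q x r b := by
            rw [Finset.sum_comm]
            exact Finset.sum_congr rfl fun r _ => (Finset.sum_mul _ _ _).symm
        _ = ∑ r, ((Eform g ginv P x r + Wform g ginv P Q x r)/2) * mixUp ginv Q x r b := by
            exact Finset.sum_congr rfl fun r _ => by rw [S.Ltr k htr hk hk2 x r]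
        _ = (1/2) * ((∑ r, Eform g ginv P x r * mixUp ginv Q x r b)
            + ∑ r, Wform g ginv P Q x r * mixUp ginv Q x r b) := by
            rw [← Finset.sum_add_distrib, Finset.mul_sum]
            exact Finset.sum_congr rfl fun r _ => by ring
        _ = _ := by
            rw [S.EQm x b, S.WQm k htr x b]
            ring
    rw [hsplit, h1, h2, S.LQm k htr hk hk2 x b]
    ring

/-- For the bi-conformal connection `∇̄ = ∇ + L`,
`∇̄_a P^{ab} = ∇̄_a Π^{ab} = ∇̄_a P^a_b = ∇̄_a Π^a_b = 0`. -/
theorem stmt_12 {n : ℕ} (g ginv P Q : Ten2 n) (h : ProjectorSetup g ginv P Q)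
    (p : ℕ) (hp0 : 0 < p) (hpn : p < n)
    (htr : ∀ x, (∑ a, mixUp ginv P x a a) = (p : ℝ)) :
    ∀ x b,
      (∑ a, cov20 (biconn (p : ℝ) g ginv P Q) (up2 ginv P) x a a b) = 0
      ∧ (∑ a, cov20 (biconn (p : ℝ) g ginv P Q) (up2 ginv Q) x a a b) = 0
      ∧ (∑ a, cov11 (biconn (p : ℝ) g ginv P Q) (mixUp ginv P) x a a b) = 0
      ∧ (∑ a, cov11 (biconn (p : ℝ) g ginv P Q) (mixUp ginv Q) x a a b) = 0 := by
  obtain ⟨h1, h2, h3, h4, h5, h6, h7, h8, h9, h10, h11, h12⟩ := h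
  have S : Setup g ginv P Q := ⟨h1, h2, h3, h4, h5, h6, h7, h8, h9, h10, h11, h12⟩
  have hk : (p:ℝ) ≠ 0 := Nat.cast_ne_zero.mpr hp0.ne'
  have hk2 : (n:ℝ) - (p:ℝ) ≠ 0 := sub_ne_zero.mpr (by exact_mod_cast hpn.ne')
  exact stmt_12' S (p:ℝ) htr hk hk2
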